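/- arXiv:2308.03614 — 3 statements merged into one kernel-verified Lean document; each statement's English description precedes it below -/
import Mathlib

section
/- Suppose $p_n \to 1/2$ as $n \to \infty$. Then for each $\varepsilon > 0$ there exist $N > 0$ and $M > 0$ (independent of $k$) such that for all integers $k > N$ and $n > M$: $1 - \varepsilon \le \dfrac{D(k+1,k+n)}{D(k+n)} \cdot \dfrac{P(Z_{k+n} = a,\, Z_k = a)}{P(Z_{k+n} = a)\,P(Z_k = a)} \le 1 + \varepsilon$. -/
open MeasureTheory Filter Finset

noncomputable section

lemma summable_pow_mul {f : ℕ → ℝ} (hf : Summable f) {s : ℝ} (hs0 : 0 ≤ s) (hs1 : s ≤ 1) :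
    Summable (fun n => f n * s ^ n) := by
  apply Summable.of_norm_bounded hf.abs
  intro n
  rw [Real.norm_eq_abs, abs_mul, abs_pow, abs_of_nonneg hs0]
  have : s ^ n ≤ 1 := pow_le_one₀ hs0 hs1
  nlinarith [abs_nonneg (f n), pow_nonneg hs0 n]

lemma gf_zero_imp_zero : ∀ (n : ℕ) (d : ℕ → ℝ), Summable d →
    (∀ s : ℝ, 0 < s → s < 1 → ∑' m, d m * s ^ m = 0) → d n = 0 := by
  have base : ∀ (d : ℕ → ℝ), Summable d →
      (∀ s : ℝ, 0 < s → s < 1 → ∑' m, d m * s ^ m = 0) → d 0 = 0 := by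
    intro d hd h
    set C := ∑' m, |d (m+1)| with hC
    have hC0 : 0 ≤ C := tsum_nonneg (fun _ => abs_nonneg _)
    have key : ∀ s : ℝ, 0 < s → s < 1 → |d 0| ≤ s * C := by
      intro s hs0 hs1
      have hsum : Summable (fun m => d m * s ^ m) := summable_pow_mul hd hs0.le hs1.le
      have h1 : ∑' m, d m * s ^ m = d 0 + ∑' m, d (m+1) * s ^ (m+1) := by
        simpa using Summable.tsum_eq_zero_add hsum
      have h2 : ∑' m, d (m+1) * s ^ (m+1) = s * ∑' m, d (m+1) * s ^ m := by
        rw [← tsum_mul_left]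
        congr 1; funext m; ring
      have h3 := h s hs0 hs1
      have h4 : d 0 = -(s * ∑' m, d (m+1) * s ^ m) := by
        rw [h1, h2] at h3; linarith
      rw [h4, abs_neg, abs_mul, abs_of_nonneg hs0.le]
      apply mul_le_mul_of_nonneg_left _ hs0.le
      have hshift : Summable (fun m => d (m+1) * s ^ m) :=
        summable_pow_mul ((summable_nat_add_iff 1).2 hd) hs0.le hs1.le
      have : |∑' m, d (m+1) * s ^ m| ≤ ∑' m, |d (m+1) * s ^ m| := by
        have hn : Summable (fun m => ‖d (m+1) * s ^ m‖) := by
          simpa only [Real.norm_eq_abs] using hshift.abs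
        have := norm_tsum_le_tsum_norm hn
        simpa only [Real.norm_eq_abs] using this
      refine this.trans ?_
      apply Summable.tsum_le_tsum _ hshift.abs ((summable_nat_add_iff 1).2 hd).abs
      intro m
      rw [abs_mul, abs_pow, abs_of_nonneg hs0.le]
      have : s ^ m ≤ 1 := pow_le_one₀ hs0.le hs1.le
      nlinarith [abs_nonneg (d (m+1)), pow_nonneg hs0.le m]
    have : ∀ ε : ℝ, 0 < ε → |d 0| ≤ ε := by
      intro ε hε
      set s := min (1/2 : ℝ) (ε / (C+1)) with hsdef
      have hs0 : 0 < s := lt_min (by norm_num) (by positivity)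
      have hs1 : s < 1 := lt_of_le_of_lt (min_le_left _ _) (by norm_num)
      have h1 := key s hs0 hs1
      have h2 : s * C ≤ (ε / (C+1)) * C :=
        mul_le_mul_of_nonneg_right (min_le_right _ _) hC0
      have h3 : (ε / (C+1)) * C ≤ ε := by
        rw [div_mul_eq_mul_div, div_le_iff₀ (by linarith)]
        nlinarith
      linarith
    have := le_of_forall_pos_le_add (by intro ε hε; linarith [this ε hε] : ∀ ε > (0:ℝ), |d 0| ≤ 0 + ε)
    have := abs_nonneg (d 0)
    have : |d 0| = 0 := le_antisymm (by linarith) (abs_nonneg _)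
    exact abs_eq_zero.mp this
  intro n
  induction n with
  | zero => exact fun d hd h => base d hd h
  | succ n ih =>
    intro d hd h
    have h0 : d 0 = 0 := base d hd h
    have hshift : Summable (fun m => d (m+1)) := (summable_nat_add_iff 1).2 hd
    refine ih (fun m => d (m+1)) hshift ?_
    intro s hs0 hs1
    have hsum : Summable (fun m => d m * s ^ m) := summable_pow_mul hd hs0.le hs1.le
    have h1 : ∑' m, d m * s ^ m = d 0 + ∑' m, d (m+1) * s ^ (m+1) := by
      simpa using Summable.tsum_eq_zero_add hsum
    have h2 : ∑' m, d (m+1) * s ^ (m+1) = s * ∑' m, d (m+1) * s ^ m := by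
      rw [← tsum_mul_left]; congr 1; funext m; ring
    have h3 := h s hs0 hs1
    rw [h1, h2, h0] at h3
    have : s * ∑' m, d (m+1) * s ^ m = 0 := by linarith
    rcases mul_eq_zero.mp this with h | h
    · exact absurd h (ne_of_gt hs0)
    · exact h

/-- Uniqueness of power series coefficients from equality of sums on `(0,1)`. -/
lemma gf_unique {f g : ℕ → ℝ} (hf : Summable f) (hg : Summable g)
    (h : ∀ s : ℝ, 0 < s → s < 1 → ∑' n, f n * s ^ n = ∑' n, g n * s ^ n) :
    ∀ n, f n = g n := by
  intro n
  have hd : Summable (fun m => f m - g m) := hf.sub hg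
  have := gf_zero_imp_zero n (fun m => f m - g m) hd ?_
  · have h0 : f n - g n = 0 := by simpa using this
    linarith
  intro s hs0 hs1
  have h1 : ∀ m, (f m - g m) * s ^ m = f m * s ^ m - g m * s ^ m := fun m => by ring
  rw [tsum_congr h1, Summable.tsum_sub (summable_pow_mul hf hs0.le hs1.le)
    (summable_pow_mul hg hs0.le hs1.le), h s hs0 hs1, sub_self]

/-- Coefficients of `(x - M + (M-x+1)s)^a / (x - (x-1)s)^(a+1)` as a power series in `s`. -/
def pmfCoef (x M : ℝ) (a b : ℕ) : ℝ :=
  ∑ i ∈ Finset.range (a+1), if i ≤ b then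
    (a.choose i : ℝ) * (x - M)^(a-i) * (M - x + 1)^i *
      ((a + b - i).choose a : ℝ) * (x-1)^(b-i) / x^(a+1+b-i)
  else 0

section Expand

/-- summand for fixed `i`. -/
private lemma pmf_term_eq {x : ℝ} (hx : 1 ≤ x) (M : ℝ) (a i : ℕ) (hi : i ≤ a) (s : ℝ) (b : ℕ) :
    (if i ≤ b then
      (a.choose i : ℝ) * (x - M)^(a-i) * (M - x + 1)^i *
        ((a + b - i).choose a : ℝ) * (x-1)^(b-i) / x^(a+1+b-i) else 0) * s ^ b
    = (if i ≤ b then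
      ((a.choose i : ℝ) * (x - M)^(a-i) * ((M - x + 1)*s)^i / x^(a+1)) *
        (((b - i) + a).choose a : ℝ) * (((x-1)/x)*s)^(b-i) else 0) := by
  split_ifs with h
  · have hb : a + b - i = (b - i) + a := by omega
    rw [hb]
    have hxpos : (0:ℝ) < x := by linarith
    rw [show a+1+b-i = (a+1) + (b-i) by omega, pow_add]
    rw [show s ^ b = s ^ (b-i) * s ^ i by rw [← pow_add]; congr 1; omega]
    rw [mul_pow ((x-1)/x) s, div_pow, mul_pow (M-x+1) s]
    field_simp
  · simp

private lemma summable_pmf_term {x : ℝ} (hx : 1 ≤ x) (a i : ℕ) {s : ℝ}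
    (hs0 : 0 ≤ s) (hs1 : s ≤ 1) (c : ℝ) :
    Summable (fun b : ℕ => if i ≤ b then
      c * (((b - i) + a).choose a : ℝ) * (((x-1)/x)*s)^(b-i) else 0) := by
  have hxpos : (0:ℝ) < x := by linarith
  have hr : ‖((x-1)/x)*s‖ < 1 := by
    rw [Real.norm_eq_abs, abs_mul, abs_of_nonneg (div_nonneg (by linarith) hxpos.le : (0:ℝ) ≤ (x-1)/x),
      abs_of_nonneg hs0]
    have h1 : (x-1)/x < 1 := by rw [div_lt_one hxpos]; linarith
    nlinarith [div_nonneg (by linarith : (0:ℝ) ≤ x - 1) hxpos.le]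
  have hsum : Summable (fun w : ℕ => c * (((w + a).choose a : ℝ) * (((x-1)/x)*s)^w)) :=
    (summable_choose_mul_geometric_of_norm_lt_one a hr).mul_left c
  have hinj : Function.Injective (· + i : ℕ → ℕ) := add_left_injective i
  set F : ℕ → ℝ := fun b => if i ≤ b then
      c * (((b - i) + a).choose a : ℝ) * (((x-1)/x)*s)^(b-i) else 0 with hF
  have hzero : ∀ b ∉ Set.range (· + i : ℕ → ℕ), F b = 0 := by
    intro b hmem
    have : ¬ i ≤ b := by
      intro hle
      exact hmem ⟨b - i, by simp; omega⟩
    rw [hF]; simp only [this, if_false]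
  have hcomp : Summable (F ∘ (· + i)) := by
    apply hsum.congr
    intro w
    simp only [hF, Function.comp]
    rw [if_pos (by omega : i ≤ w + i), show w + i - i = w by omega]
    ring
  exact (Function.Injective.summable_iff hinj hzero).1 hcomp

private lemma tsum_pmf_term {x : ℝ} (hx : 1 ≤ x) (a i : ℕ) {s : ℝ}
    (hs0 : 0 ≤ s) (hs1 : s < 1) (c : ℝ) :
    ∑' b : ℕ, (if i ≤ b then
      c * (((b - i) + a).choose a : ℝ) * (((x-1)/x)*s)^(b-i) else 0)
    = c / (1 - ((x-1)/x)*s)^(a+1) := by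
  have hxpos : (0:ℝ) < x := by linarith
  have hr : ‖((x-1)/x)*s‖ < 1 := by
    rw [Real.norm_eq_abs, abs_mul, abs_of_nonneg (div_nonneg (by linarith) hxpos.le : (0:ℝ) ≤ (x-1)/x),
      abs_of_nonneg hs0]
    have h1 : (x-1)/x < 1 := by rw [div_lt_one hxpos]; linarith
    nlinarith [div_nonneg (by linarith : (0:ℝ) ≤ x - 1) hxpos.le]
  have hinj : Function.Injective (· + i : ℕ → ℕ) := add_left_injective i
  set F : ℕ → ℝ := fun b => if i ≤ b then
      c * (((b - i) + a).choose a : ℝ) * (((x-1)/x)*s)^(b-i) else 0 with hF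
  have hsupp : Function.support F ⊆ Set.range (· + i) := by
    intro b hb
    by_contra hmem
    have : ¬ i ≤ b := by
      intro hle
      exact hmem ⟨b - i, by simp; omega⟩
    apply hb
    rw [hF]; simp only [this, if_false]
  have h1 : ∑' w : ℕ, F (w + i) = ∑' b, F b := Function.Injective.tsum_eq hinj hsupp
  have h2 : ∀ w : ℕ, F (w + i) = c * ((((w + a).choose a : ℝ)) * (((x-1)/x)*s)^w) := by
    intro w
    simp only [hF]
    rw [if_pos (by omega : i ≤ w + i), show w + i - i = w by omega]
    ring
  rw [← h1, tsum_congr h2, tsum_mul_left, tsum_choose_mul_geometric_of_norm_lt_one a hr]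
  field_simp


end Expand

lemma summable_pmfCoef_mul {x : ℝ} (hx : 1 ≤ x) (M : ℝ) (a : ℕ) {s : ℝ}
    (hs0 : 0 ≤ s) (hs1 : s ≤ 1) :
    Summable (fun b : ℕ => pmfCoef x M a b * s ^ b) := by
  have hstep : ∀ b : ℕ, pmfCoef x M a b * s ^ b = ∑ i ∈ Finset.range (a+1),
      (if i ≤ b then ((a.choose i : ℝ) * (x - M)^(a-i) * ((M - x + 1)*s)^i / x^(a+1)) *
        (((b - i) + a).choose a : ℝ) * (((x-1)/x)*s)^(b-i) else 0) := by
    intro b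
    rw [pmfCoef, Finset.sum_mul]
    refine Finset.sum_congr rfl (fun i hi => ?_)
    exact pmf_term_eq hx M a i (by simp at hi; omega) s b
  refine Summable.congr ?_ (fun b => (hstep b).symm)
  exact summable_sum (fun i _ => summable_pmf_term hx a i hs0 hs1 _)

lemma summable_pmfCoef {x : ℝ} (hx : 1 ≤ x) (M : ℝ) (a : ℕ) :
    Summable (fun b : ℕ => pmfCoef x M a b) := by
  have := summable_pmfCoef_mul hx M a (zero_le_one (α := ℝ)) (le_refl (1:ℝ))
  simpa using this

lemma tsum_pmfCoef_mul {x : ℝ} (hx : 1 ≤ x) (M : ℝ) (a : ℕ) {s : ℝ}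
    (hs0 : 0 ≤ s) (hs1 : s < 1) :
    ∑' b : ℕ, pmfCoef x M a b * s ^ b
      = (x - M + (M - x + 1)*s)^a / (x - (x-1)*s)^(a+1) := by
  have hxpos : (0:ℝ) < x := by linarith
  have hstep : ∀ b : ℕ, pmfCoef x M a b * s ^ b = ∑ i ∈ Finset.range (a+1),
      (if i ≤ b then ((a.choose i : ℝ) * (x - M)^(a-i) * ((M - x + 1)*s)^i / x^(a+1)) *
        (((b - i) + a).choose a : ℝ) * (((x-1)/x)*s)^(b-i) else 0) := by
    intro b
    rw [pmfCoef, Finset.sum_mul]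
    refine Finset.sum_congr rfl (fun i hi => ?_)
    exact pmf_term_eq hx M a i (by simp at hi; omega) s b
  rw [tsum_congr hstep, Summable.tsum_finsetSum (fun i _ => summable_pmf_term hx a i hs0 hs1.le _)]
  have h2 : ∀ i ∈ Finset.range (a+1), (∑' b : ℕ, (if i ≤ b then
      ((a.choose i : ℝ) * (x - M)^(a-i) * ((M - x + 1)*s)^i / x^(a+1)) *
        (((b - i) + a).choose a : ℝ) * (((x-1)/x)*s)^(b-i) else 0))
      = ((a.choose i : ℝ) * (x - M)^(a-i) * ((M - x + 1)*s)^i / x^(a+1)) / (1 - ((x-1)/x)*s)^(a+1) :=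
    fun i _ => tsum_pmf_term hx a i hs0 hs1 _
  rw [Finset.sum_congr rfl h2, ← Finset.sum_div, ← Finset.sum_div]
  have hnum : ∑ i ∈ Finset.range (a+1),
      ((a.choose i : ℝ) * (x - M)^(a-i) * ((M - x + 1)*s)^i) = (x - M + (M - x + 1)*s)^a := by
    rw [show x - M + (M-x+1)*s = (M-x+1)*s + (x-M) by ring, add_pow]
    exact Finset.sum_congr rfl (fun i hi => by ring)
  have hden : (x - (x-1)*s)^(a+1) = x^(a+1) * (1 - ((x-1)/x)*s)^(a+1) := by
    rw [← mul_pow]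
    congr 1
    field_simp
  rw [hnum, hden, div_div]

lemma pmfCoef_two_zero (a : ℕ) : ∀ b, pmfCoef 2 0 a b = (1/2)^(b+1) := by
  have hx : (1:ℝ) ≤ 2 := by norm_num
  refine gf_unique (summable_pmfCoef hx 0 a) ?_ ?_
  · have : Summable (fun b : ℕ => ((1:ℝ)/2)^b) := summable_geometric_of_lt_one (by norm_num) (by norm_num)
    exact Summable.congr (this.mul_left (1/2)) (fun b => by rw [pow_succ]; ring)
  intro s hs0 hs1
  rw [tsum_pmfCoef_mul hx 0 a hs0.le hs1]
  have h1 : (2 - 0 + (0 - 2 + 1)*s : ℝ) = 2 - s := by ring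
  have h2 : (2 - (2-1)*s : ℝ) = 2 - s := by ring
  have hne : (2 - s : ℝ) ≠ 0 := by linarith
  rw [h1, h2, pow_succ, ← div_div, div_self (pow_ne_zero a hne)]
  have h3 : ∀ b : ℕ, ((1:ℝ)/2)^(b+1) * s^b = (1/2) * (s/2)^b := by
    intro b; rw [pow_succ, div_pow, div_pow, one_pow]; ring
  rw [tsum_congr h3, tsum_mul_left, tsum_geometric_of_lt_one (by positivity) (by linarith)]
  rw [one_div, eq_comm, mul_inv_eq_iff_eq_mul₀ (by linarith : (1 - s/2 : ℝ) ≠ 0)]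
  field_simp

lemma alt_identity (a : ℕ) :
    ∑ i ∈ Finset.range (a+1), (-1:ℝ)^i * (a.choose i : ℝ) * (((a+a-i).choose a : ℝ)) = 1 := by
  have h := pmfCoef_two_zero a a
  rw [pmfCoef] at h
  have e : ∀ i ∈ Finset.range (a+1),
      (if i ≤ a then (a.choose i : ℝ) * (2 - 0)^(a-i) * (0 - 2 + 1)^i *
        ((a + a - i).choose a : ℝ) * ((2:ℝ)-1)^(a-i) / (2:ℝ)^(a+1+a-i) else 0)
      = ((-1:ℝ)^i * (a.choose i : ℝ) * (((a+a-i).choose a : ℝ))) * (1/2)^(a+1) := by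
    intro i hi
    have hia : i ≤ a := by simp at hi; omega
    rw [if_pos hia]
    have hsplit : (2:ℝ)^(a+1+a-i) = 2^(a+1) * 2^(a-i) := by
      rw [← pow_add]; congr 1; omega
    rw [hsplit]
    have : (0 - 2 + 1 : ℝ) = -1 := by norm_num
    rw [this]
    have h2 : ((2:ℝ)-1) = 1 := by norm_num
    rw [h2, one_pow]
    have hne : (2:ℝ)^(a+1) ≠ 0 := by positivity
    have hne2 : (2:ℝ)^(a-i) ≠ 0 := by positivity
    simp only [one_div, inv_pow]
    field_simp
    ring
  rw [Finset.sum_congr rfl e, ← Finset.sum_mul] at h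
  have h2 : ((1:ℝ)/2)^(a+1) ≠ 0 := by positivity
  exact mul_right_cancel₀ h2 (by rw [h, one_mul])

section MeasurePart

open MeasureTheory

variable {Ω : Type*} [MeasurableSpace Ω] (P : Measure Ω) [IsProbabilityMeasure P]
  (Z : ℕ → Ω → ℕ)

/-- extension of a finite path to `ℕ → ℕ`. -/
def extFin {t : ℕ} (v : Fin (t+1) → ℕ) : ℕ → ℕ := fun i => if h : i < t+1 then v ⟨i, h⟩ else 0

lemma extFin_le {t : ℕ} (v : Fin (t+1) → ℕ) {i : ℕ} (h : i ≤ t) :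
    extFin v i = v ⟨i, by omega⟩ := by
  rw [extFin, dif_pos (by omega : i < t+1)]

def snocFun {t : ℕ} (v : Fin (t+1) → ℕ) (z : ℕ) : Fin (t+2) → ℕ :=
  fun j => if h : j.1 < t+1 then v ⟨j.1, h⟩ else z

lemma extFin_snocFun_le {t : ℕ} (v : Fin (t+1) → ℕ) (z : ℕ) {i : ℕ} (h : i ≤ t) :
    extFin (snocFun v z) i = extFin v i := by
  rw [extFin_le _ (by omega : i ≤ t+1), extFin_le _ h, snocFun]
  rw [dif_pos (by omega : i < t+1)]

lemma extFin_snocFun_top {t : ℕ} (v : Fin (t+1) → ℕ) (z : ℕ) :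
    extFin (snocFun v z) (t+1) = z := by
  rw [extFin_le _ (by omega : t+1 ≤ t+1), snocFun]
  exact dif_neg (lt_irrefl _)

/-- the equivalence peeling off the last coordinate. -/
def snocEquiv (t : ℕ) : ((Fin (t+1) → ℕ) × ℕ) ≃ (Fin (t+2) → ℕ) where
  toFun vz := snocFun vz.1 vz.2
  invFun w := (fun j => w ⟨j.1, by omega⟩, w ⟨t+1, by omega⟩)
  left_inv := by
    rintro ⟨v, z⟩
    have h1 : (fun j : Fin (t+1) => snocFun v z ⟨j.1, by omega⟩) = v := by
      funext j
      show (if h : j.1 < t+1 then v ⟨j.1, h⟩ else z) = v j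
      rw [dif_pos j.2]
    have h2 : snocFun v z ⟨t+1, by omega⟩ = z := dif_neg (lt_irrefl _)
    exact Prod.ext h1 h2
  right_inv := by
    intro w
    funext j
    show (if h : j.1 < t+1 then w ⟨j.1, by omega⟩ else w ⟨t+1, by omega⟩) = w j
    split_ifs with h
    · congr 1
    · have hj2 := j.2
      have hj : j.1 = t+1 := by omega
      congr 1
      exact Fin.ext (by simpa using hj.symm)

lemma measurable_cyl (hm : ∀ n, Measurable (Z n)) (t : ℕ) (z : ℕ → ℕ) :
    MeasurableSet {ω | ∀ i ≤ t, Z i ω = z i} := by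
  have : {ω | ∀ i ≤ t, Z i ω = z i} = ⋂ (i : ℕ), ⋂ (_ : i ≤ t), (Z i)⁻¹' {z i} := by
    ext ω; simp [Set.mem_iInter]
  rw [this]
  exact MeasurableSet.iInter (fun i => MeasurableSet.iInter
    (fun _ => (hm i) (measurableSet_singleton _)))

/-- decomposition of an event depending on finitely many coordinates into cylinders. -/
lemma decomp (hm : ∀ n, Measurable (Z n)) (t : ℕ) (Q : (ℕ → ℕ) → Prop) [DecidablePred Q]
    (hQ : ∀ f g : ℕ → ℕ, (∀ i ≤ t, f i = g i) → Q f → Q g) :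
    P {ω | Q (fun i => Z i ω)} = ∑' v : Fin (t+1) → ℕ,
      if Q (extFin v) then P {ω | ∀ i ≤ t, Z i ω = extFin v i} else 0 := by
  set f : (Fin (t+1) → ℕ) → Set Ω :=
    fun v => if Q (extFin v) then {ω | ∀ i ≤ t, Z i ω = extFin v i} else ∅ with hf
  have hfv : ∀ u, f u = if Q (extFin u) then {ω | ∀ i ≤ t, Z i ω = extFin u i} else ∅ :=
    fun _ => rfl
  have hmeas : ∀ v, MeasurableSet (f v) := by
    intro v; rw [hfv]
    split_ifs
    · exact measurable_cyl Z hm t _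
    · exact MeasurableSet.empty
  have hdisj : Pairwise (Function.onFun Disjoint f) := by
    intro v w hvw
    rw [Function.onFun, hfv, hfv]
    split_ifs with h1 h2 h2
    · rw [Set.disjoint_left]
      intro ω hv hw
      apply hvw
      funext j
      have e1 : Z j.1 ω = extFin v j.1 := hv j.1 (by omega)
      have e2 : Z j.1 ω = extFin w j.1 := hw j.1 (by omega)
      rw [extFin_le v (by omega : j.1 ≤ t)] at e1
      rw [extFin_le w (by omega : j.1 ≤ t)] at e2
      have : v ⟨j.1, by omega⟩ = w ⟨j.1, by omega⟩ := by rw [← e1, ← e2]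
      simpa using this
    · exact Set.disjoint_empty _
    · exact Set.empty_disjoint _
    · exact Set.empty_disjoint _
  have hunion : (⋃ v, f v) = {ω | Q (fun i => Z i ω)} := by
    ext ω
    constructor
    · intro hmem
      rcases Set.mem_iUnion.1 hmem with ⟨v, hv⟩
      rw [hfv] at hv
      split_ifs at hv with hQv
      · exact hQ _ _ (fun i hi => (hv i hi).symm) hQv
      · exact absurd hv (Set.notMem_empty ω)
    · intro hω
      refine Set.mem_iUnion.2 ⟨fun j => Z j.1 ω, ?_⟩
      rw [hfv]
      have heq : ∀ i ≤ t, Z i ω = extFin (fun j : Fin (t+1) => Z j.1 ω) i := by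
        intro i hi
        rw [extFin_le _ hi]
      rw [if_pos (hQ _ _ heq hω)]
      exact fun i hi => heq i hi
  rw [← hunion, measure_iUnion hdisj hmeas]
  refine tsum_congr (fun v => ?_)
  rw [hfv]
  split_ifs
  · rfl
  · exact measure_empty

end MeasurePart

/-- `m_k = q_k / p_k` where `q_k = 1 - p_k`. -/
def mSeq (p : ℕ → ℝ) (k : ℕ) : ℝ := (1 - p k) / p k

/-- `D(k,n) = 1 + ∑_{j=k}^n m_j m_{j+1} ⋯ m_n`. -/
def Dkn (m : ℕ → ℝ) (k n : ℕ) : ℝ :=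
  1 + ∑ j ∈ Finset.Icc k n, ∏ i ∈ Finset.Icc j n, m i

/-- `D(n) = D(1,n)`. -/
def Dn (m : ℕ → ℝ) (n : ℕ) : ℝ := Dkn m 1 n

/-- The one-step transition probability `P(Z_n = j ∣ Z_{n-1} = z)
= C(z+j, j) p_n^{1+z} q_n^j`. -/
def transProb (p : ℕ → ℝ) (n z j : ℕ) : ℝ :=
  ((z + j).choose j : ℝ) * p n ^ (1 + z) * (1 - p n) ^ j

/-- `Z` is a Markov chain with `Z_0 = 0` and one-step transitions `transProb p`,
i.e. a branching process with geometric offspring distributions in the varying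
environment `p`, with one immigrant in each generation.  This is expressed by
prescribing all finite-dimensional distributions. -/
def IsBPVEI {Ω : Type*} [MeasurableSpace Ω] (P : Measure Ω)
    (p : ℕ → ℝ) (Z : ℕ → Ω → ℕ) : Prop :=
  (∀ n, Measurable (Z n)) ∧
  ∀ (n : ℕ) (z : ℕ → ℕ),
    (P {ω | ∀ i ≤ n, Z i ω = z i}).toReal =
      (if z 0 = 0 then (1 : ℝ) else 0) *
        ∏ i ∈ Finset.Icc 1 n, transProb p i (z (i - 1)) (z i)

lemma transProb_nonneg {p : ℕ → ℝ} {n : ℕ} (hp1 : 0 < p n) (hp2 : p n ≤ 1/2) (z j : ℕ) :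
    0 ≤ transProb p n z j := by
  have h1 : (0:ℝ) ≤ 1 - p n := by linarith
  unfold transProb
  positivity

lemma summable_transProb_mul {p : ℕ → ℝ} {n : ℕ} (hp1 : 0 < p n) (hp2 : p n ≤ 1/2)
    (z : ℕ) {s : ℝ} (hs0 : 0 ≤ s) (hs1 : s < 1) :
    Summable (fun b => transProb p n z b * s ^ b) := by
  have hq0 : (0:ℝ) ≤ 1 - p n := by linarith
  have hr : ‖(1 - p n) * s‖ < 1 := by
    rw [Real.norm_eq_abs, abs_of_nonneg (mul_nonneg hq0 hs0)]
    nlinarith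
  have hsum := (summable_choose_mul_geometric_of_norm_lt_one z hr).mul_left (p n ^ (1+z))
  apply hsum.congr
  intro b
  unfold transProb
  have hc : ((b+z).choose z : ℕ) = (b+z).choose b := by
    have h := Nat.choose_symm (Nat.le_add_right b z)
    rwa [show b + z - b = z by omega] at h
  rw [show z + b = b + z from add_comm z b, ← hc, mul_pow]
  ring

lemma tsum_transProb_mul {p : ℕ → ℝ} {n : ℕ} (hp1 : 0 < p n) (hp2 : p n ≤ 1/2)
    (z : ℕ) {s : ℝ} (hs0 : 0 ≤ s) (hs1 : s < 1) :
    ∑' b : ℕ, transProb p n z b * s ^ b = (p n / (1 - (1 - p n) * s)) ^ (1 + z) := by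
  have hq0 : (0:ℝ) ≤ 1 - p n := by linarith
  have hr : ‖(1 - p n) * s‖ < 1 := by
    rw [Real.norm_eq_abs, abs_of_nonneg (mul_nonneg hq0 hs0)]
    nlinarith
  have hqs : (0:ℝ) < 1 - (1 - p n) * s := by
    have : (1 - p n) * s < 1 := by nlinarith
    linarith
  have h1 : ∀ b : ℕ, transProb p n z b * s ^ b
      = p n ^ (1+z) * (((b + z).choose z : ℝ) * ((1 - p n) * s) ^ b) := by
    intro b
    unfold transProb
    have hc : ((b+z).choose z : ℕ) = (b+z).choose b := by
      have h := Nat.choose_symm (Nat.le_add_right b z)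
      rwa [show b + z - b = z by omega] at h
    rw [show z + b = b + z from add_comm z b, ← hc, mul_pow]
    ring
  rw [tsum_congr h1, tsum_mul_left, tsum_choose_mul_geometric_of_norm_lt_one z hr]
  rw [div_pow]
  rw [show z + 1 = 1 + z from add_comm z 1]
  rw [one_div]
  field_simp


lemma div_pow_helper (p D1 U V c : ℝ) (a : ℕ) (hp : p ≠ 0) (hD : D1 ≠ 0) (hV : V ≠ 0) :
    (p/D1) * (c * (p * U / D1)^a / (p * V / D1)^(a+1)) = c * U^a / V^(a+1) := by
  rw [div_pow, div_pow, mul_pow, mul_pow]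
  field_simp
  ring

/-- One step of the linear-fractional recursion for the generating functions. -/
lemma lft_step {p s x Mv : ℝ} (a : ℕ) (hp1 : 0 < p) (hp2 : p ≤ 1/2) (hs0 : 0 ≤ s) (hs1 : s < 1)
    (hx : 1 ≤ x) (c : ℝ) :
    (p/(1-(1-p)*s)) * (c * (x - Mv + (Mv - x + 1)*(p/(1-(1-p)*s)))^a
        / (x - (x-1)*(p/(1-(1-p)*s)))^(a+1))
    = c * ((1+((1-p)/p)*x) - ((1-p)/p)*Mv + (((1-p)/p)*Mv - (1+((1-p)/p)*x) + 1)*s)^a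
        / ((1+((1-p)/p)*x) - ((1+((1-p)/p)*x)-1)*s)^(a+1) := by
  have hq1 : 1 - p < 1 := by linarith
  have hq0 : 0 < 1 - p := by linarith
  have hqs : (0:ℝ) < 1 - (1-p)*s := by nlinarith
  have hm0 : 0 < (1-p)/p := div_pos hq0 hp1
  have hmx : 0 < 1 + ((1-p)/p)*x := by nlinarith
  have hV : (0:ℝ) < (1+((1-p)/p)*x) - ((1+((1-p)/p)*x)-1)*s := by nlinarith
  have e1 : x - Mv + (Mv - x + 1)*(p/(1-(1-p)*s))
      = p * ((1+((1-p)/p)*x) - ((1-p)/p)*Mv + (((1-p)/p)*Mv - (1+((1-p)/p)*x) + 1)*s)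
          / (1-(1-p)*s) := by
    field_simp
    ring
  have e2 : x - (x-1)*(p/(1-(1-p)*s))
      = p * ((1+((1-p)/p)*x) - ((1+((1-p)/p)*x)-1)*s) / (1-(1-p)*s) := by
    field_simp
    ring
  rw [e1, e2, div_pow_helper _ _ _ _ _ a (ne_of_gt hp1) (ne_of_gt hqs) (ne_of_gt hV)]

section Chain

open MeasureTheory

variable {Ω : Type*} [MeasurableSpace Ω] (P : Measure Ω) [IsProbabilityMeasure P]
  (p : ℕ → ℝ) (Z : ℕ → Ω → ℕ)

lemma cyl_eq_ofReal (hZ : IsBPVEI P p Z) (t : ℕ) (z : ℕ → ℕ) :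
    P {ω | ∀ i ≤ t, Z i ω = z i} = ENNReal.ofReal ((if z 0 = 0 then (1:ℝ) else 0) *
      ∏ i ∈ Finset.Icc 1 t, transProb p i (z (i - 1)) (z i)) := by
  rw [← hZ.2 t z, ENNReal.ofReal_toReal (measure_ne_top P _)]

lemma cyl_snoc (hZ : IsBPVEI P p Z) (t : ℕ) (v : Fin (t+1) → ℕ) (z : ℕ) :
    P {ω | ∀ i ≤ t+1, Z i ω = extFin (snocFun v z) i}
      = P {ω | ∀ i ≤ t, Z i ω = extFin v i}
          * ENNReal.ofReal (transProb p (t+1) (extFin v t) z) := by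
  rw [cyl_eq_ofReal P p Z hZ (t+1), cyl_eq_ofReal P p Z hZ t]
  have hsplit : ∏ i ∈ Finset.Icc 1 (t+1),
        transProb p i (extFin (snocFun v z) (i-1)) (extFin (snocFun v z) i)
      = (∏ i ∈ Finset.Icc 1 t, transProb p i (extFin v (i-1)) (extFin v i))
          * transProb p (t+1) (extFin v t) z := by
    rw [Finset.prod_Icc_succ_top (by omega : 1 ≤ t+1)]
    congr 1
    · refine Finset.prod_congr rfl (fun i hi => ?_)
      rw [Finset.mem_Icc] at hi
      rw [extFin_snocFun_le v z (by omega : i - 1 ≤ t), extFin_snocFun_le v z (by omega : i ≤ t)]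
    · rw [show t + 1 - 1 = t from rfl, extFin_snocFun_le v z (le_refl t), extFin_snocFun_top]
  rw [hsplit, extFin_snocFun_le v z (Nat.zero_le t)]
  have hW : 0 ≤ (if extFin v 0 = 0 then (1:ℝ) else 0) *
      ∏ i ∈ Finset.Icc 1 t, transProb p i (extFin v (i-1)) (extFin v i) := by
    rw [← hZ.2 t (extFin v)]
    exact ENNReal.toReal_nonneg
  rw [← mul_assoc, ENNReal.ofReal_mul hW]

lemma joint_base (a b k : ℕ) :
    P {ω | Z k ω = b ∧ Z k ω = a} = if b = a then P {ω | Z k ω = a} else 0 := by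
  split_ifs with h
  · subst h
    congr 1
    ext ω
    simp
  · have : {ω | Z k ω = b ∧ Z k ω = a} = ∅ := by
      ext ω
      simp only [Set.mem_setOf_eq, Set.mem_empty_iff_false, iff_false, not_and]
      intro h1 h2
      exact h (h1 ▸ h2 ▸ rfl)
    rw [this, measure_empty]

lemma joint_step (hZ : IsBPVEI P p Z) (k a b t : ℕ) (hk : k ≤ t) :
    P {ω | Z (t+1) ω = b ∧ Z k ω = a}
      = ∑' z : ℕ, P {ω | Z t ω = z ∧ Z k ω = a}
          * ENNReal.ofReal (transProb p (t+1) z b) := by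
  have hm := hZ.1
  have hQ1 : ∀ f g : ℕ → ℕ, (∀ i ≤ t+1, f i = g i) →
      (f (t+1) = b ∧ f k = a) → (g (t+1) = b ∧ g k = a) := by
    intro f g h ⟨h1, h2⟩
    exact ⟨(h (t+1) (le_refl _)) ▸ h1, (h k (by omega)) ▸ h2⟩
  have hQ2 : ∀ z : ℕ, ∀ f g : ℕ → ℕ, (∀ i ≤ t, f i = g i) →
      (f t = z ∧ f k = a) → (g t = z ∧ g k = a) := by
    intro z f g h ⟨h1, h2⟩
    exact ⟨(h t (le_refl _)) ▸ h1, (h k hk) ▸ h2⟩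
  calc P {ω | Z (t+1) ω = b ∧ Z k ω = a}
      = ∑' w : Fin (t+2) → ℕ, if (extFin w (t+1) = b ∧ extFin w k = a)
          then P {ω | ∀ i ≤ t+1, Z i ω = extFin w i} else 0 :=
        decomp P Z hm (t+1) (fun g => g (t+1) = b ∧ g k = a) hQ1
    _ = ∑' vz : (Fin (t+1) → ℕ) × ℕ,
          if (extFin (snocFun vz.1 vz.2) (t+1) = b ∧ extFin (snocFun vz.1 vz.2) k = a)
          then P {ω | ∀ i ≤ t+1, Z i ω = extFin (snocFun vz.1 vz.2) i} else 0 :=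
        ((snocEquiv t).tsum_eq _).symm
    _ = ∑' v : Fin (t+1) → ℕ, ∑' z : ℕ,
          if (extFin (snocFun v z) (t+1) = b ∧ extFin (snocFun v z) k = a)
          then P {ω | ∀ i ≤ t+1, Z i ω = extFin (snocFun v z) i} else 0 :=
        ENNReal.tsum_prod (f := fun v z =>
          if (extFin (snocFun v z) (t+1) = b ∧ extFin (snocFun v z) k = a)
          then P {ω | ∀ i ≤ t+1, Z i ω = extFin (snocFun v z) i} else 0)
    _ = ∑' v : Fin (t+1) → ℕ, if extFin v k = a
          then P {ω | ∀ i ≤ t, Z i ω = extFin v i}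
            * ENNReal.ofReal (transProb p (t+1) (extFin v t) b) else 0 := by
        refine tsum_congr (fun v => ?_)
        have hinner : ∀ z : ℕ,
            (if (extFin (snocFun v z) (t+1) = b ∧ extFin (snocFun v z) k = a)
            then P {ω | ∀ i ≤ t+1, Z i ω = extFin (snocFun v z) i} else 0)
            = if (z = b ∧ extFin v k = a)
              then P {ω | ∀ i ≤ t, Z i ω = extFin v i}
                * ENNReal.ofReal (transProb p (t+1) (extFin v t) z) else 0 := by
          intro z
          rw [extFin_snocFun_top, extFin_snocFun_le v z (by omega : k ≤ t),
            cyl_snoc P p Z hZ t v z]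
        rw [tsum_congr hinner]
        rw [tsum_eq_single b (fun z hz => by rw [if_neg (fun hc => hz hc.1)])]
        by_cases hva : extFin v k = a
        · rw [if_pos ⟨rfl, hva⟩, if_pos hva]
        · rw [if_neg (fun hc => hva hc.2), if_neg hva]
    _ = ∑' v : Fin (t+1) → ℕ, ∑' z : ℕ,
          if (extFin v t = z ∧ extFin v k = a)
          then P {ω | ∀ i ≤ t, Z i ω = extFin v i}
            * ENNReal.ofReal (transProb p (t+1) z b) else 0 := by
        refine tsum_congr (fun v => ?_)
        rw [tsum_eq_single (extFin v t) (fun z hz => by rw [if_neg (fun hc => hz hc.1.symm)])]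
        by_cases hva : extFin v k = a
        · rw [if_pos hva, if_pos ⟨rfl, hva⟩]
        · rw [if_neg hva, if_neg (fun hc => hva hc.2)]
    _ = ∑' z : ℕ, ∑' v : Fin (t+1) → ℕ,
          if (extFin v t = z ∧ extFin v k = a)
          then P {ω | ∀ i ≤ t, Z i ω = extFin v i}
            * ENNReal.ofReal (transProb p (t+1) z b) else 0 := ENNReal.tsum_comm
    _ = ∑' z : ℕ, (∑' v : Fin (t+1) → ℕ,
          if (extFin v t = z ∧ extFin v k = a)
          then P {ω | ∀ i ≤ t, Z i ω = extFin v i} else 0)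
            * ENNReal.ofReal (transProb p (t+1) z b) := by
        refine tsum_congr (fun z => ?_)
        rw [← ENNReal.tsum_mul_right]
        refine tsum_congr (fun v => ?_)
        rw [ite_mul, zero_mul]
    _ = ∑' z : ℕ, P {ω | Z t ω = z ∧ Z k ω = a}
          * ENNReal.ofReal (transProb p (t+1) z b) := by
        refine tsum_congr (fun z => ?_)
        congr 1
        exact (decomp P Z hm t (fun g => g t = z ∧ g k = a) (hQ2 z)).symm

lemma joint_sum_le_one (hZ : IsBPVEI P p Z) (k a t : ℕ) :
    ∑' z : ℕ, P {ω | Z t ω = z ∧ Z k ω = a} ≤ 1 := by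
  have hmeas : ∀ z : ℕ, MeasurableSet {ω | Z t ω = z ∧ Z k ω = a} := by
    intro z
    have : {ω | Z t ω = z ∧ Z k ω = a} = (Z t)⁻¹' {z} ∩ (Z k)⁻¹' {a} := by
      ext ω; simp [Set.mem_inter_iff]
    rw [this]
    exact ((hZ.1 t) (measurableSet_singleton _)).inter ((hZ.1 k) (measurableSet_singleton _))
  have hdisj : Pairwise (Function.onFun Disjoint
      (fun z => {ω | Z t ω = z ∧ Z k ω = a})) := by
    intro z1 z2 hz
    rw [Function.onFun, Set.disjoint_left]
    intro ω h1 h2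
    exact hz (h1.1 ▸ h2.1 ▸ rfl)
  rw [← measure_iUnion hdisj hmeas]
  exact prob_le_one

end Chain

section ClosedForm

open MeasureTheory

lemma Dkn_base (m : ℕ → ℝ) (k : ℕ) : Dkn m (k+1) k = 1 := by
  unfold Dkn
  rw [Finset.Icc_eq_empty (by omega)]
  simp

lemma prod_base (m : ℕ → ℝ) (k : ℕ) : (∏ i ∈ Finset.Icc (k+1) k, m i) = 1 := by
  rw [Finset.Icc_eq_empty (by omega)]
  simp

lemma Dkn_succ (m : ℕ → ℝ) (k t : ℕ) (h : k ≤ t) :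
    Dkn m (k+1) (t+1) = 1 + m (t+1) * Dkn m (k+1) t := by
  unfold Dkn
  rw [Finset.sum_Icc_succ_top (by omega : k+1 ≤ t+1)]
  rw [Finset.sum_congr rfl (fun j hj => Finset.prod_Icc_succ_top
    (by rw [Finset.mem_Icc] at hj; omega : j ≤ t+1) m)]
  rw [Finset.Icc_self, Finset.prod_singleton, ← Finset.sum_mul]
  ring

lemma Dkn_one_le {m : ℕ → ℝ} (k t : ℕ) (hm : ∀ i, k+1 ≤ i → 0 ≤ m i) :
    1 ≤ Dkn m (k+1) t := by
  unfold Dkn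
  have : 0 ≤ ∑ j ∈ Finset.Icc (k+1) t, ∏ i ∈ Finset.Icc j t, m i := by
    apply Finset.sum_nonneg
    intro j hj
    rw [Finset.mem_Icc] at hj
    apply Finset.prod_nonneg
    intro i hi
    rw [Finset.mem_Icc] at hi
    exact hm i (by omega)
  linarith

variable {Ω : Type*} [MeasurableSpace Ω] (P : Measure Ω) [IsProbabilityMeasure P]
  (p : ℕ → ℝ) (Z : ℕ → Ω → ℕ)

theorem joint_closed (hZ : IsBPVEI P p Z) (hp : ∀ i, 1 ≤ i → 0 < p i ∧ p i ≤ 1/2)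
    (k a : ℕ) : ∀ t, k ≤ t → ∀ b,
    (P {ω | Z t ω = b ∧ Z k ω = a}).toReal
      = (P {ω | Z k ω = a}).toReal
          * pmfCoef (Dkn (mSeq p) (k+1) t) (∏ i ∈ Finset.Icc (k+1) t, mSeq p i) a b := by
  have hm0 : ∀ i, k+1 ≤ i → 0 ≤ mSeq p i := by
    intro i hi
    obtain ⟨h1, h2⟩ := hp i (by omega)
    exact div_nonneg (by linarith) h1.le
  set c := (P {ω | Z k ω = a}).toReal with hc
  have hsummable : ∀ t, Summable (fun b => (P {ω | Z t ω = b ∧ Z k ω = a}).toReal) := by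
    intro t
    apply ENNReal.summable_toReal
    exact ne_top_of_le_ne_top ENNReal.one_ne_top (joint_sum_le_one P p Z hZ k a t)
  have hGF : ∀ t, k ≤ t → ∀ s : ℝ, 0 ≤ s → s < 1 →
      ∑' b, (P {ω | Z t ω = b ∧ Z k ω = a}).toReal * s^b
        = c * (Dkn (mSeq p) (k+1) t - (∏ i ∈ Finset.Icc (k+1) t, mSeq p i)
            + ((∏ i ∈ Finset.Icc (k+1) t, mSeq p i) - Dkn (mSeq p) (k+1) t + 1)*s)^a
            / (Dkn (mSeq p) (k+1) t - (Dkn (mSeq p) (k+1) t - 1)*s)^(a+1) := by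
    intro t ht
    induction t, ht using Nat.le_induction with
    | base =>
        intro s hs0 hs1
        have hbase : ∀ b, (P {ω | Z k ω = b ∧ Z k ω = a}).toReal = if b = a then c else 0 := by
          intro b
          rw [joint_base P Z a b k, apply_ite ENNReal.toReal, ENNReal.toReal_zero, hc]
        rw [tsum_congr (fun b => by rw [hbase b]),
          tsum_eq_single a (fun b hb => by rw [if_neg hb, zero_mul]), if_pos rfl,
          Dkn_base, prod_base]
        rw [show (1:ℝ) - 1 + (1-1+1)*s = s by ring, show (1:ℝ) - (1-1)*s = 1 by ring,
          one_pow, div_one]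
    | succ t ht ih =>
        intro s hs0 hs1
        obtain ⟨hp1, hp2⟩ := hp (t+1) (by omega)
        set f := p (t+1) / (1 - (1 - p (t+1))*s) with hf
        have hq0 : (0:ℝ) < 1 - p (t+1) := by linarith
        have hqs : (0:ℝ) < 1 - (1 - p (t+1))*s := by nlinarith
        have hf0 : 0 ≤ f := by rw [hf]; positivity
        have hf1 : f < 1 := by rw [hf, div_lt_one hqs]; nlinarith
        have htrans0 : ∀ z b : ℕ, 0 ≤ transProb p (t+1) z b :=
          fun z b => transProb_nonneg hp1 hp2 z b
        have hENN : ∑' b : ℕ, P {ω | Z (t+1) ω = b ∧ Z k ω = a} * ENNReal.ofReal (s^b)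
            = ∑' z : ℕ, P {ω | Z t ω = z ∧ Z k ω = a} * ENNReal.ofReal (f^(1+z)) := by
          calc ∑' b : ℕ, P {ω | Z (t+1) ω = b ∧ Z k ω = a} * ENNReal.ofReal (s^b)
              = ∑' b : ℕ, ∑' z : ℕ, P {ω | Z t ω = z ∧ Z k ω = a}
                  * (ENNReal.ofReal (transProb p (t+1) z b) * ENNReal.ofReal (s^b)) := by
                refine tsum_congr (fun b => ?_)
                rw [joint_step P p Z hZ k a b t ht, ← ENNReal.tsum_mul_right]
                exact tsum_congr (fun z => by rw [mul_assoc])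
            _ = ∑' z : ℕ, ∑' b : ℕ, P {ω | Z t ω = z ∧ Z k ω = a}
                  * (ENNReal.ofReal (transProb p (t+1) z b) * ENNReal.ofReal (s^b)) :=
                ENNReal.tsum_comm
            _ = ∑' z : ℕ, P {ω | Z t ω = z ∧ Z k ω = a} * ENNReal.ofReal (f^(1+z)) := by
                refine tsum_congr (fun z => ?_)
                rw [ENNReal.tsum_mul_left]
                congr 1
                have h1 : ∀ b : ℕ, ENNReal.ofReal (transProb p (t+1) z b) * ENNReal.ofReal (s^b)
                    = ENNReal.ofReal (transProb p (t+1) z b * s^b) := by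
                  intro b
                  rw [← ENNReal.ofReal_mul (htrans0 z b)]
                rw [tsum_congr h1,
                  ← ENNReal.ofReal_tsum_of_nonneg
                    (fun b => mul_nonneg (htrans0 z b) (pow_nonneg hs0 b))
                    (summable_transProb_mul hp1 hp2 z hs0 hs1),
                  tsum_transProb_mul hp1 hp2 z hs0 hs1]
        have key : ∑' b, (P {ω | Z (t+1) ω = b ∧ Z k ω = a}).toReal * s^b
            = ∑' z, (P {ω | Z t ω = z ∧ Z k ω = a}).toReal * f^(1+z) := by
          have hL : (∑' b : ℕ, P {ω | Z (t+1) ω = b ∧ Z k ω = a} * ENNReal.ofReal (s^b)).toReal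
              = ∑' b, (P {ω | Z (t+1) ω = b ∧ Z k ω = a}).toReal * s^b := by
            rw [ENNReal.tsum_toReal_eq
              (fun b => ENNReal.mul_ne_top (measure_ne_top P _) ENNReal.ofReal_ne_top)]
            exact tsum_congr (fun b => by
              rw [ENNReal.toReal_mul, ENNReal.toReal_ofReal (pow_nonneg hs0 b)])
          have hR : (∑' z : ℕ, P {ω | Z t ω = z ∧ Z k ω = a} * ENNReal.ofReal (f^(1+z))).toReal
              = ∑' z, (P {ω | Z t ω = z ∧ Z k ω = a}).toReal * f^(1+z) := by
            rw [ENNReal.tsum_toReal_eq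
              (fun z => ENNReal.mul_ne_top (measure_ne_top P _) ENNReal.ofReal_ne_top)]
            exact tsum_congr (fun z => by
              rw [ENNReal.toReal_mul, ENNReal.toReal_ofReal (pow_nonneg hf0 _)])
          rw [← hL, ← hR, hENN]
        rw [key]
        have key2 : ∑' z, (P {ω | Z t ω = z ∧ Z k ω = a}).toReal * f^(1+z)
            = f * ∑' z, (P {ω | Z t ω = z ∧ Z k ω = a}).toReal * f^z := by
          rw [← tsum_mul_left]
          refine tsum_congr (fun z => ?_)
          rw [pow_add, pow_one]
          ring
        rw [key2, ih f hf0 hf1]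
        have halg := lft_step (p := p (t+1)) (s := s) (x := Dkn (mSeq p) (k+1) t)
          (Mv := ∏ i ∈ Finset.Icc (k+1) t, mSeq p i) a hp1 hp2 hs0 hs1
          (Dkn_one_le k t hm0) c
        rw [hf]
        refine halg.trans ?_
        rw [Dkn_succ (mSeq p) k t ht,
          Finset.prod_Icc_succ_top (by omega : k+1 ≤ t+1) (mSeq p),
          show mSeq p (t+1) = (1 - p (t+1))/(p (t+1)) from rfl]
        ring
  intro t ht b
  have hX1 : 1 ≤ Dkn (mSeq p) (k+1) t := Dkn_one_le k t hm0
  refine gf_unique (hsummable t)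
    ((summable_pmfCoef hX1 (∏ i ∈ Finset.Icc (k+1) t, mSeq p i) a).mul_left c) ?_ b
  intro s hs0 hs1
  rw [hGF t ht s hs0.le hs1]
  have h1 : ∀ b : ℕ, (c * pmfCoef (Dkn (mSeq p) (k+1) t)
      (∏ i ∈ Finset.Icc (k+1) t, mSeq p i) a b) * s^b
      = c * (pmfCoef (Dkn (mSeq p) (k+1) t) (∏ i ∈ Finset.Icc (k+1) t, mSeq p i) a b * s^b) :=
    fun b => by ring
  rw [tsum_congr h1, tsum_mul_left,
    tsum_pmfCoef_mul hX1 (∏ i ∈ Finset.Icc (k+1) t, mSeq p i) a hs0.le hs1, mul_div_assoc]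

lemma Z0_eq_one (hZ : IsBPVEI P p Z) : P {ω | Z 0 ω = 0} = 1 := by
  have h := hZ.2 0 (fun _ => 0)
  have hset : {ω | ∀ i ≤ 0, Z i ω = (fun _ => 0) i} = {ω | Z 0 ω = 0} := by
    ext ω
    simp [Nat.le_zero]
  rw [hset] at h
  norm_num at h
  have := ENNReal.ofReal_toReal (measure_ne_top P {ω | Z 0 ω = 0})
  rw [h] at this
  rw [← this]
  norm_num

lemma marg_eq_joint0 (hZ : IsBPVEI P p Z) (t b : ℕ) :
    P {ω | Z t ω = b} = P {ω | Z t ω = b ∧ Z 0 ω = 0} := by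
  have hmeasB : MeasurableSet {ω | Z 0 ω = 0} := (hZ.1 0) (measurableSet_singleton _)
  have hB := Z0_eq_one P p Z hZ
  have hcompl : P ({ω | Z 0 ω = 0}ᶜ) = 0 := by
    rw [measure_compl hmeasB (measure_ne_top P _), hB, measure_univ, tsub_self]
  refine le_antisymm ?_ (measure_mono (fun ω h => h.1))
  calc P {ω | Z t ω = b}
      ≤ P ({ω | Z t ω = b ∧ Z 0 ω = 0} ∪ {ω | Z 0 ω = 0}ᶜ) := by
        apply measure_mono
        intro ω h
        by_cases h0 : Z 0 ω = 0
        · exact Or.inl ⟨h, h0⟩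
        · exact Or.inr h0
    _ ≤ P {ω | Z t ω = b ∧ Z 0 ω = 0} + P ({ω | Z 0 ω = 0}ᶜ) := measure_union_le _ _
    _ = P {ω | Z t ω = b ∧ Z 0 ω = 0} := by rw [hcompl, add_zero]

lemma pmfCoef_zero (x M : ℝ) (b : ℕ) : pmfCoef x M 0 b = (x-1)^b / x^(1+b) := by
  unfold pmfCoef
  rw [Finset.sum_range_one]
  norm_num

lemma marg_closed (hZ : IsBPVEI P p Z) (hp : ∀ i, 1 ≤ i → 0 < p i ∧ p i ≤ 1/2) (t b : ℕ) :
    (P {ω | Z t ω = b}).toReal = (Dn (mSeq p) t - 1)^b / (Dn (mSeq p) t)^(1+b) := by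
  rw [marg_eq_joint0 P p Z hZ t b,
    joint_closed P p Z hZ hp 0 0 t (Nat.zero_le t) b]
  have h0 : (P {ω | Z 0 ω = 0}).toReal = 1 := by
    rw [Z0_eq_one P p Z hZ]
    norm_num
  rw [h0, one_mul, pmfCoef_zero]
  rfl

end ClosedForm

section FinalHelpers

open Finset

lemma one_le_prod_real {s : Finset ℕ} {f : ℕ → ℝ} (h : ∀ i ∈ s, 1 ≤ f i) :
    1 ≤ ∏ i ∈ s, f i := by
  calc (1:ℝ) = ∏ _i ∈ s, 1 := by rw [Finset.prod_const_one]
    _ ≤ ∏ i ∈ s, f i := Finset.prod_le_prod (fun _ _ => zero_le_one) h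

lemma pow_one_add_le {w : ℝ} (hw0 : 0 ≤ w) (hw1 : w ≤ 1) (a : ℕ) :
    (1+w)^a ≤ 1 + ((2:ℝ)^a - 1)*w := by
  induction a with
  | zero => norm_num
  | succ a ih =>
    have h2 : (1:ℝ) ≤ 2^a := one_le_pow₀ (by norm_num)
    calc (1+w)^(a+1) = (1+w)^a * (1+w) := by rw [pow_succ]
      _ ≤ (1 + (2^a - 1)*w) * (1+w) := mul_le_mul_of_nonneg_right ih (by linarith)
      _ ≤ 1 + ((2:ℝ)^(a+1) - 1)*w := by
          rw [pow_succ]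
          nlinarith [mul_nonneg (mul_nonneg (sub_nonneg.2 h2) hw0) (sub_nonneg.2 hw1)]

/-- the key lower bound on `D(k+1,k+n) - 1` in terms of the product of the `m i`. -/
lemma geom_bound {m : ℕ → ℝ} {δ : ℝ} (hδ0 : 0 < δ) (k n : ℕ) (hn : 1 ≤ n)
    (h1 : ∀ i, k+1 ≤ i → i ≤ k+n → 1 ≤ m i) (h2 : ∀ i, k+1 ≤ i → i ≤ k+n → m i ≤ 1+δ)
    (hhalf : (1/(1+δ))^n ≤ 1/2) :
    (∏ i ∈ Icc (k+1) (k+n), m i) ≤ 2*δ*(Dkn m (k+1) (k+n) - 1) := by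
  set M := ∏ i ∈ Icc (k+1) (k+n), m i with hM
  have hM1 : 1 ≤ M := one_le_prod_real (fun i hi => by
    rw [Finset.mem_Icc] at hi; exact h1 i hi.1 hi.2)
  have hδ1 : (0:ℝ) < 1 + δ := by linarith
  -- each term of the sum is at least `M / (1+δ)^(j-k-1)`
  have hterm : ∀ j, k+1 ≤ j → j ≤ k+n →
      M / (1+δ)^(j-(k+1)) ≤ ∏ i ∈ Icc j (k+n), m i := by
    intro j hj1 hj2
    have hsplit : M = (∏ i ∈ Icc (k+1) (j-1), m i) * ∏ i ∈ Icc j (k+n), m i := by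
      rw [hM, ← Finset.prod_union]
      · congr 1
        ext i
        simp only [Finset.mem_union, Finset.mem_Icc]
        omega
      · rw [Finset.disjoint_left]
        intro i hi1 hi2
        rw [Finset.mem_Icc] at hi1 hi2
        omega
    have hbound : (∏ i ∈ Icc (k+1) (j-1), m i) ≤ (1+δ)^(j-(k+1)) := by
      have h3 : ∏ i ∈ Icc (k+1) (j-1), m i ≤ ∏ _i ∈ Icc (k+1) (j-1), (1+δ) :=
        Finset.prod_le_prod
          (fun i hi => by
            rw [Finset.mem_Icc] at hi
            linarith [h1 i hi.1 (by omega)])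
          (fun i hi => by rw [Finset.mem_Icc] at hi; exact h2 i hi.1 (by omega))
      rw [Finset.prod_const, Nat.card_Icc, show j - 1 + 1 - (k+1) = j - (k+1) by omega] at h3
      exact h3
    have hprodpos : (0:ℝ) < ∏ i ∈ Icc j (k+n), m i :=
      lt_of_lt_of_le zero_lt_one (one_le_prod_real (fun i hi => by
        rw [Finset.mem_Icc] at hi; exact h1 i (by omega) hi.2))
    rw [div_le_iff₀ (by positivity)]
    calc M = (∏ i ∈ Icc (k+1) (j-1), m i) * ∏ i ∈ Icc j (k+n), m i := hsplit
      _ ≤ (1+δ)^(j-(k+1)) * ∏ i ∈ Icc j (k+n), m i := by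
          apply mul_le_mul_of_nonneg_right hbound hprodpos.le
      _ = (∏ i ∈ Icc j (k+n), m i) * (1+δ)^(j-(k+1)) := by ring
  have hsum : M * ∑ r ∈ range n, (1/(1+δ))^r ≤ Dkn m (k+1) (k+n) - 1 := by
    have : Dkn m (k+1) (k+n) - 1 = ∑ j ∈ Icc (k+1) (k+n), ∏ i ∈ Icc j (k+n), m i := by
      unfold Dkn; ring
    rw [this, show Icc (k+1) (k+n) = Ico (k+1) (k+n+1) by ext x; simp [Finset.mem_Icc, Finset.mem_Ico],
      Finset.sum_Ico_eq_sum_range, show k+n+1-(k+1) = n by omega, Finset.mul_sum]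
    apply Finset.sum_le_sum
    intro r hr
    rw [Finset.mem_range] at hr
    have := hterm (k+1+r) (by omega) (by omega)
    rw [show k+1+r - (k+1) = r by omega] at this
    calc M * (1/(1+δ))^r = M / (1+δ)^r := by
          rw [div_pow, one_pow]; ring
      _ ≤ ∏ i ∈ Icc (k+1+r) (k+n), m i := this
  have hgeom : 1/(2*δ) ≤ ∑ r ∈ range n, (1/(1+δ))^r := by
    have hρ : (1/(1+δ) : ℝ) < 1 := by rw [div_lt_one hδ1]; linarith
    have hρ0 : (0:ℝ) < 1/(1+δ) := by positivity
    have hne : (1/(1+δ) : ℝ) ≠ 1 := ne_of_lt hρ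
    rw [geom_sum_eq hne n]
    have heq : ((1/(1+δ))^n - 1)/(1/(1+δ)-1) = (1-(1/(1+δ))^n)/(1-1/(1+δ)) := by
      rw [div_eq_div_iff (by linarith) (by linarith)]
      ring
    rw [heq]
    have h1ρ : (0:ℝ) < 1 - 1/(1+δ) := by linarith
    rw [div_le_div_iff₀ (by positivity) h1ρ]
    have hA : 1 - 1/(1+δ) ≤ δ := by
      have h5 : (1:ℝ) - 1/(1+δ) = δ/(1+δ) := by field_simp; ring
      rw [h5]
      exact div_le_self hδ0.le (by linarith)
    nlinarith [hhalf]
  calc M = 2*δ*(M * (1/(2*δ))) := by field_simp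
    _ ≤ 2*δ*(M * ∑ r ∈ range n, (1/(1+δ))^r) := by
        apply mul_le_mul_of_nonneg_left _ (by positivity)
        exact mul_le_mul_of_nonneg_left hgeom (by linarith)
    _ ≤ 2*δ*(Dkn m (k+1) (k+n) - 1) := by
        apply mul_le_mul_of_nonneg_left hsum (by positivity)

end FinalHelpers

lemma R_formula {x M : ℝ} (hx : 0 < x) (a : ℕ) :
    x * pmfCoef x M a a = ∑ i ∈ Finset.range (a+1), (-1:ℝ)^i * (a.choose i : ℝ)
      * (((a+a-i).choose a : ℝ)) * ((x-M)*(x-1)/(x*x))^(a-i) * ((x-1-M)/x)^i := by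
  unfold pmfCoef
  rw [Finset.mul_sum]
  refine Finset.sum_congr rfl (fun i hi => ?_)
  rw [Finset.mem_range] at hi
  have hia : i ≤ a := by omega
  rw [if_pos hia]
  have h1 : (M - x + 1 : ℝ)^i = (-1)^i * (x-1-M)^i := by
    rw [show (M - x + 1 : ℝ) = -(x-1-M) by ring, neg_pow]
  have hsplit : x^(a+1+a-i) = x * ((x*x)^(a-i) * x^i) := by
    rw [show a+1+a-i = 1 + ((a-i) + ((a-i) + i)) by omega, pow_add, pow_add, pow_add,
      pow_one, mul_pow]
    ring
  have hxne : x ≠ 0 := ne_of_gt hx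
  rw [h1, hsplit, div_pow, div_pow, mul_pow (x-M) (x-1)]
  field_simp

lemma S_bound (a : ℕ) {α β η : ℝ} (hη0 : 0 ≤ η) (hη1 : η ≤ 1)
    (hα0 : 1 - η ≤ α) (hα1 : α ≤ 1) (hβ0 : 1 - η ≤ β) (hβ1 : β ≤ 1) :
    |∑ i ∈ Finset.range (a+1), (-1:ℝ)^i * (a.choose i : ℝ) * (((a+a-i).choose a : ℝ))
        * α^(a-i) * β^i - 1|
      ≤ (∑ i ∈ Finset.range (a+1), (a.choose i : ℝ) * (((a+a-i).choose a : ℝ))) * ((a:ℝ) * η) := by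
  have h1η : (0:ℝ) ≤ 1 - η := by linarith
  have hα' : (0:ℝ) ≤ α := by linarith
  have hβ' : (0:ℝ) ≤ β := by linarith
  have hid := alt_identity a
  have hdiff : ∑ i ∈ Finset.range (a+1), (-1:ℝ)^i * (a.choose i : ℝ)
        * (((a+a-i).choose a : ℝ)) * α^(a-i) * β^i - 1
      = ∑ i ∈ Finset.range (a+1), ((-1:ℝ)^i * (a.choose i : ℝ) * (((a+a-i).choose a : ℝ))
          * α^(a-i) * β^i - (-1:ℝ)^i * (a.choose i : ℝ) * (((a+a-i).choose a : ℝ))) := by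
    rw [Finset.sum_sub_distrib, hid]
  rw [hdiff]
  refine (Finset.abs_sum_le_sum_abs _ _).trans ?_
  rw [Finset.sum_mul]
  apply Finset.sum_le_sum
  intro i hi
  rw [Finset.mem_range] at hi
  have hc : (0:ℝ) ≤ (a.choose i : ℝ) * (((a+a-i).choose a : ℝ)) := by positivity
  have hprod1 : α^(a-i)*β^i ≤ 1 :=
    mul_le_one₀ (pow_le_one₀ hα' hα1) (pow_nonneg hβ' i) (pow_le_one₀ hβ' hβ1)
  have e1 : (1-η)^a ≤ α^(a-i) * β^i := by
    calc (1-η)^a = (1-η)^(a-i)*(1-η)^i := by rw [← pow_add]; congr 1; omega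
      _ ≤ α^(a-i) * β^i :=
        mul_le_mul (pow_le_pow_left₀ h1η hα0 _) (pow_le_pow_left₀ h1η hβ0 _)
          (pow_nonneg h1η _) (pow_nonneg hα' _)
  have e2 : 1 - (a:ℝ)*η ≤ (1-η)^a := by
    have h3 := one_add_mul_le_pow (show (-2:ℝ) ≤ -η by linarith) a
    calc 1 - (a:ℝ)*η = 1 + (a:ℝ)*(-η) := by ring
      _ ≤ (1 + -η)^a := h3
      _ = (1-η)^a := by ring_nf
  have hprod0 : 1 - (a:ℝ)*η ≤ α^(a-i)*β^i := le_trans e2 e1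
  have hkey : (-1:ℝ)^i * (a.choose i : ℝ) * (((a+a-i).choose a : ℝ)) * α^(a-i) * β^i
      - (-1:ℝ)^i * (a.choose i : ℝ) * (((a+a-i).choose a : ℝ))
      = (-1:ℝ)^i * (((a.choose i : ℝ) * (((a+a-i).choose a : ℝ))) * (α^(a-i)*β^i - 1)) := by
    ring
  rw [hkey, abs_mul, abs_pow, abs_neg, abs_one, one_pow, one_mul, abs_mul,
    abs_of_nonneg hc]
  apply mul_le_mul_of_nonneg_left _ hc
  rw [abs_le]
  constructor
  · linarith
  · have : (0:ℝ) ≤ (a:ℝ)*η := mul_nonneg (Nat.cast_nonneg a) hη0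
    linarith


section SmallHelpers

lemma helper_m_bound {δ pi : ℝ} (hδ0 : 0 < δ) (hδ1 : δ ≤ 1) (hlow : 1/2 - δ/8 < pi) :
    1 - pi ≤ (1+δ)*pi := by nlinarith

lemma helper_alpha_le_one {Δ Mp : ℝ} (h2 : 2 ≤ Δ) (hM : 1 ≤ Mp) (hMΔ : Mp ≤ Δ - 1) :
    (Δ-Mp)*(Δ-1) ≤ Δ*Δ := by nlinarith

lemma helper_MpΔ {δ Δ Mp : ℝ} (hδ0 : 0 < δ) (h2 : 2 ≤ Δ) (hgeo : Mp ≤ 2*δ*(Δ-1)) :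
    Mp ≤ 2*δ*Δ := by nlinarith

lemma helper_aη {η δ : ℝ} (ha : (0:ℝ) ≤ η) (hδ0 : 0 < δ) (hηδ : η ≤ 3*δ) (a : ℕ) :
    (a:ℝ)*η ≤ ((a:ℝ)+1)*(3*δ) := by
  have h0 : (0:ℝ) ≤ (a:ℝ) := Nat.cast_nonneg a
  nlinarith

lemma helper_2aw {w δ A : ℝ} (hw0 : 0 ≤ w) (hwδ : w ≤ δ) (hA : 1 ≤ A) (hδ0 : 0 < δ) :
    (A - 1) * w ≤ A * δ := by nlinarith

lemma helper_eps_prod {e : ℝ} (h0 : 0 < e) (h1 : e ≤ 1) : (1+e/24)*(1+e/8) ≤ 1+e := by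
  nlinarith

lemma helper_one_le_nδ {δ : ℝ} {n : ℕ} (hδ0 : 0 < δ) (hge : 1 ≤ (n:ℝ) * δ) (hn0 : (0:ℝ) < n) :
    1/(n:ℝ) ≤ δ := by
  rw [div_le_iff₀ hn0]
  linarith [hge, mul_comm (n:ℝ) δ]

end SmallHelpers

set_option maxHeartbeats 2000000 in
/-- Dependence between the events `{Z_k = a}` and `{Z_{k+n} = a}`: if `p_n → 1/2`,
then for each `ε > 0` there exist `N, M > 0` independent of `k` such that
`1 - ε ≤ (D(k+1,k+n)/D(k+n)) ⬝ P(Z_{k+n}=a, Z_k=a)/(P(Z_{k+n}=a) P(Z_k=a)) ≤ 1 + ε`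
for all `k > N`, `n > M`. -/
theorem stmt15 {Ω : Type*} [MeasurableSpace Ω] (P : Measure Ω) [IsProbabilityMeasure P]
    (p : ℕ → ℝ) (hp : ∀ k, 1 ≤ k → 0 < p k ∧ p k ≤ 1 / 2)
    (Z : ℕ → Ω → ℕ) (hZ : IsBPVEI P p Z) (a : ℕ)
    (hlim : Tendsto p atTop (nhds (1 / 2))) (ε : ℝ) (hε : 0 < ε) :
    ∃ N M : ℕ, 0 < N ∧ 0 < M ∧ ∀ k n : ℕ, N < k → M < n →
      1 - ε ≤ (Dkn (mSeq p) (k + 1) (k + n) / Dn (mSeq p) (k + n)) *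
          ((P {ω | Z (k + n) ω = a ∧ Z k ω = a}).toReal /
            ((P {ω | Z (k + n) ω = a}).toReal * (P {ω | Z k ω = a}).toReal)) ∧
      (Dkn (mSeq p) (k + 1) (k + n) / Dn (mSeq p) (k + n)) *
          ((P {ω | Z (k + n) ω = a ∧ Z k ω = a}).toReal /
            ((P {ω | Z (k + n) ω = a}).toReal * (P {ω | Z k ω = a}).toReal)) ≤ 1 + ε := by
  set ε' := min ε 1 with hε'def
  have hε'0 : 0 < ε' := lt_min hε zero_lt_one
  have hε'1 : ε' ≤ 1 := min_le_right _ _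
  have hε'ε : ε' ≤ ε := min_le_left _ _
  set K := ∑ i ∈ Finset.range (a+1), (a.choose i : ℝ) * (((a+a-i).choose a : ℝ)) with hKdef
  have hK1 : 1 ≤ K := by
    have h0 : (1:ℝ) ≤ (a.choose 0 : ℝ) * (((a+a-0).choose a : ℝ)) := by
      have h1 : 1 ≤ (a+a-0).choose a := Nat.choose_pos (by omega)
      have h2 : (1:ℝ) ≤ ((a+a-0).choose a : ℝ) := by exact_mod_cast h1
      simpa [Nat.choose_zero_right] using h2
    refine h0.trans ?_
    exact Finset.single_le_sum (f := fun i => (a.choose i : ℝ) * (((a+a-i).choose a : ℝ)))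
      (fun i _ => by positivity) (Finset.mem_range.2 (by omega))
  set C := K*((a:ℝ)+1) + 2^a + 1 with hCdef
  have h2a : (1:ℝ) ≤ 2^a := one_le_pow₀ (by norm_num)
  have hC1 : 1 ≤ C := by
    have h9 : (0:ℝ) ≤ K*((a:ℝ)+1) := by positivity
    rw [hCdef]
    linarith
  have hC0 : 0 < C := by linarith
  set δ := min 1 (ε' / (24*C)) with hδdef
  have hδ0 : 0 < δ := lt_min one_pos (by positivity)
  have hδ1 : δ ≤ 1 := min_le_left _ _
  have hδ2 : δ ≤ ε'/(24*C) := min_le_right _ _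
  rw [Metric.tendsto_atTop] at hlim
  obtain ⟨N₀, hN₀⟩ := hlim (δ/8) (by positivity)
  obtain ⟨n₀, hn₀⟩ : ∃ n₀ : ℕ, ∀ n ≥ n₀, (1/(1+δ))^n ≤ 1/2 := by
    have hρlim := tendsto_pow_atTop_nhds_zero_of_lt_one
      (show (0:ℝ) ≤ 1/(1+δ) by positivity)
      (by rw [div_lt_one (by linarith)]; linarith)
    rw [Metric.tendsto_atTop] at hρlim
    obtain ⟨n₀, h⟩ := hρlim (1/2) (by norm_num)
    refine ⟨n₀, fun n hn => ?_⟩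
    have h2 := h n hn
    rw [Real.dist_eq, sub_zero, abs_of_nonneg (by positivity)] at h2
    linarith
  refine ⟨max N₀ 1, max (max n₀ (⌈1/δ⌉₊ + 1)) 1,
    lt_of_lt_of_le one_pos (le_max_right _ _),
    lt_of_lt_of_le one_pos (le_max_right _ _), ?_⟩
  intro k n hk hn
  have hk1 : 1 ≤ k := by have := le_max_right N₀ 1; omega
  have hkN₀ : N₀ ≤ k := by have := le_max_left N₀ 1; omega
  have hn1 : 1 ≤ n := by have := le_max_right (max n₀ (⌈1/δ⌉₊ + 1)) 1; omega
  have hnn₀ : n₀ ≤ n := by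
    have h1 := le_max_left n₀ (⌈1/δ⌉₊ + 1)
    have h2 := le_max_left (max n₀ (⌈1/δ⌉₊ + 1)) 1
    omega
  have hnceil : ⌈1/δ⌉₊ + 1 ≤ n := by
    have h1 := le_max_right n₀ (⌈1/δ⌉₊ + 1)
    have h2 := le_max_left (max n₀ (⌈1/δ⌉₊ + 1)) 1
    omega
  have hn0R : (0:ℝ) < n := by exact_mod_cast lt_of_lt_of_le one_pos hn1
  have h1δn : 1/(n:ℝ) ≤ δ := by
    have hge : (1/δ : ℝ) ≤ n := by
      calc (1/δ:ℝ) ≤ (⌈1/δ⌉₊:ℝ) := Nat.le_ceil _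
        _ ≤ n := by exact_mod_cast (by omega : ⌈1/δ⌉₊ ≤ n)
    rw [div_le_iff₀ hδ0] at hge
    exact helper_one_le_nδ hδ0 hge hn0R
  have hm1 : ∀ i, 1 ≤ i → 1 ≤ mSeq p i := by
    intro i hi
    obtain ⟨h1, h2⟩ := hp i hi
    rw [mSeq, le_div_iff₀ h1]
    linarith
  have hmδ : ∀ i, k+1 ≤ i → mSeq p i ≤ 1 + δ := by
    intro i hi
    have hdist := hN₀ i (by omega)
    rw [Real.dist_eq] at hdist
    obtain ⟨hp1, hp2⟩ := hp i (by omega)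
    have hlow : 1/2 - δ/8 < p i := by
      have := (abs_lt.mp hdist).1
      linarith
    rw [mSeq, div_le_iff₀ hp1]
    exact helper_m_bound hδ0 hδ1 hlow
  set Δ := Dkn (mSeq p) (k+1) (k+n) with hΔdef
  set Mp := ∏ i ∈ Finset.Icc (k+1) (k+n), mSeq p i with hMpdef
  set D := Dn (mSeq p) (k+n) with hDdef
  set Dk := Dn (mSeq p) k with hDkdef
  have hMp1 : 1 ≤ Mp := one_le_prod_real (fun i hi => by
    rw [Finset.mem_Icc] at hi; exact hm1 i (by omega))
  have hΔn : 1 + (n:ℝ) ≤ Δ := by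
    rw [hΔdef]
    unfold Dkn
    have h := Finset.card_nsmul_le_sum (Finset.Icc (k+1) (k+n))
      (fun j => ∏ i ∈ Finset.Icc j (k+n), mSeq p i) 1
      (fun j hj => one_le_prod_real (fun i hi => by
        rw [Finset.mem_Icc] at hj hi; exact hm1 i (by omega)))
    rw [Nat.card_Icc, show k+n+1-(k+1) = n by omega, nsmul_eq_mul, mul_one] at h
    linarith
  have hΔ2 : (2:ℝ) ≤ Δ := by
    have : (1:ℝ) ≤ n := by exact_mod_cast hn1
    linarith
  have hMpΔ : Mp ≤ Δ - 1 := by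
    rw [hΔdef]
    unfold Dkn
    have hmem : k+1 ∈ Finset.Icc (k+1) (k+n) := Finset.mem_Icc.2 (by omega)
    have h := Finset.single_le_sum (f := fun j => ∏ i ∈ Finset.Icc j (k+n), mSeq p i)
      (fun j hj => Finset.prod_nonneg (fun i hi => by
        rw [Finset.mem_Icc] at hj hi; linarith [hm1 i (by omega)])) hmem
    rw [hMpdef]
    linarith
  have hΔD : Δ ≤ D := by
    rw [hΔdef, hDdef]
    unfold Dn Dkn
    have hsub : Finset.Icc (k+1) (k+n) ⊆ Finset.Icc 1 (k+n) := by
      intro j hj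
      rw [Finset.mem_Icc] at hj ⊢
      omega
    have h := Finset.sum_le_sum_of_subset_of_nonneg
      (f := fun j => ∏ i ∈ Finset.Icc j (k+n), mSeq p i) hsub
      (fun j hj _ => Finset.prod_nonneg (fun i hi => by
        rw [Finset.mem_Icc] at hj hi; linarith [hm1 i (by omega)]))
    linarith
  have hgeo : Mp ≤ 2*δ*(Δ - 1) := by
    rw [hMpdef, hΔdef]
    exact geom_bound hδ0 k n hn1
      (fun i hi1 hi2 => hm1 i (by omega))
      (fun i hi1 hi2 => hmδ i hi1)
      (hn₀ n hnn₀)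
  have hDk2 : 1 + (k:ℝ) ≤ Dk := by
    rw [hDkdef]
    unfold Dn Dkn
    have h := Finset.card_nsmul_le_sum (Finset.Icc 1 k)
      (fun j => ∏ i ∈ Finset.Icc j k, mSeq p i) 1
      (fun j hj => one_le_prod_real (fun i hi => by
        rw [Finset.mem_Icc] at hj hi; exact hm1 i (by omega)))
    rw [Nat.card_Icc, show k+1-1 = k by omega, nsmul_eq_mul, mul_one] at h
    linarith
  have hk1R : (1:ℝ) ≤ k := by exact_mod_cast hk1
  have hjoint := joint_closed P p Z hZ hp k a (k+n) (by omega) a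
  have hmargKN := marg_closed P p Z hZ hp (k+n) a
  have hmargK := marg_closed P p Z hZ hp k a
  have hD2 : (2:ℝ) ≤ D := le_trans hΔ2 hΔD
  have hΔ0 : (0:ℝ) < Δ := by linarith
  have hD0 : (0:ℝ) < D := by linarith
  have hDk0 : (0:ℝ) < Dk := by linarith
  have hDk1 : (1:ℝ) ≤ Dk - 1 := by linarith
  have hD1 : (1:ℝ) ≤ D - 1 := by linarith
  rw [hjoint, hmargK, hmargKN]
  have hEq : (Δ / D) * (((Dk - 1)^a/Dk^(1+a) * pmfCoef Δ Mp a a)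
        / ((D - 1)^a/D^(1+a) * ((Dk - 1)^a/Dk^(1+a))))
      = (D/(D-1))^a * (Δ * pmfCoef Δ Mp a a) := by
    have h1 : (Dk - 1 : ℝ) ≠ 0 := by linarith
    have h2 : (Dk : ℝ) ≠ 0 := ne_of_gt hDk0
    have h3 : (D - 1 : ℝ) ≠ 0 := by linarith
    have h4 : (D : ℝ) ≠ 0 := ne_of_gt hD0
    rw [div_pow]
    field_simp
    ring
  rw [hEq, R_formula hΔ0 a]
  set S := ∑ i ∈ Finset.range (a+1), (-1:ℝ)^i * (a.choose i : ℝ)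
      * (((a+a-i).choose a : ℝ)) * ((Δ-Mp)*(Δ-1)/(Δ*Δ))^(a-i) * ((Δ-1-Mp)/Δ)^i with hSdef
  set η := (1+Mp)/Δ with hηdef
  have hη0 : 0 ≤ η := by rw [hηdef]; positivity
  have hη1 : η ≤ 1 := by
    rw [hηdef, div_le_one hΔ0]
    linarith
  have hβeq : (Δ-1-Mp)/Δ = 1 - η := by
    rw [hηdef]
    field_simp
    ring
  have hβ1 : (Δ-1-Mp)/Δ ≤ 1 := by
    rw [div_le_one hΔ0]
    linarith
  have hα1 : (Δ-Mp)*(Δ-1)/(Δ*Δ) ≤ 1 := by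
    rw [div_le_one (by positivity)]
    exact helper_alpha_le_one hΔ2 hMp1 hMpΔ
  have hα0 : 1 - η ≤ (Δ-Mp)*(Δ-1)/(Δ*Δ) := by
    have hsub : (Δ-Mp)*(Δ-1)/(Δ*Δ) - (1 - η) = Mp/(Δ*Δ) := by
      rw [hηdef]
      field_simp
      ring
    have hnn : 0 ≤ Mp/(Δ*Δ) := by positivity
    linarith
  have hηδ : η ≤ 3*δ := by
    have h1 : (1:ℝ)/Δ ≤ δ := by
      have h4 : (1:ℝ)/Δ ≤ 1/(n:ℝ) :=
        one_div_le_one_div_of_le hn0R (by linarith : (n:ℝ) ≤ Δ)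
      linarith [h1δn]
    have h2 : Mp/Δ ≤ 2*δ := by
      rw [div_le_iff₀ hΔ0]
      have := helper_MpΔ hδ0 hΔ2 hgeo
      linarith [mul_comm (2*δ) Δ]
    have : η = 1/Δ + Mp/Δ := by rw [hηdef]; ring
    linarith
  have hSb := S_bound a hη0 hη1 hα0 hα1 (le_of_eq hβeq.symm) hβ1
  rw [← hSdef] at hSb
  have hS8 : |S - 1| ≤ ε'/8 := by
    refine hSb.trans ?_
    have hKa : K * ((a:ℝ) * η) ≤ K * ((a:ℝ)+1) * (3*δ) := by
      have h3 : (a:ℝ)*η ≤ ((a:ℝ)+1)*(3*δ) := helper_aη hη0 hδ0 hηδ a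
      calc K * ((a:ℝ)*η) ≤ K * (((a:ℝ)+1)*(3*δ)) :=
            mul_le_mul_of_nonneg_left h3 (by linarith)
        _ = K * ((a:ℝ)+1) * (3*δ) := by ring
    refine hKa.trans ?_
    have hKC : K*((a:ℝ)+1) ≤ C := by
      rw [hCdef]
      linarith
    calc K * ((a:ℝ)+1) * (3*δ) ≤ C * (3*δ) :=
          mul_le_mul_of_nonneg_right hKC (by positivity)
      _ ≤ C * (3*(ε'/(24*C))) := by
          apply mul_le_mul_of_nonneg_left _ hC0.le
          linarith
      _ = ε'/8 := by field_simp; ring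
  have hSlow : 1 - ε'/8 ≤ S := by
    have := (abs_le.mp hS8).1
    linarith
  have hShigh : S ≤ 1 + ε'/8 := by
    have := (abs_le.mp hS8).2
    linarith
  have hS0 : 0 ≤ S := by linarith
  have hDD : D/(D-1) = 1 + 1/(D-1) := by rw [one_add_div (by linarith : (D-1:ℝ) ≠ 0)]; congr 1; ring
  have hw0 : (0:ℝ) ≤ 1/(D-1) := by positivity
  have hw1 : 1/(D-1) ≤ δ := by
    have hDn : (n:ℝ) ≤ D - 1 := by linarith
    have h4 : (1:ℝ)/(D-1) ≤ 1/(n:ℝ) := one_div_le_one_div_of_le hn0R hDn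
    linarith [h1δn]
  have hpow1 : 1 ≤ (D/(D-1))^a := one_le_pow₀ (by rw [hDD]; linarith)
  have hpow2 : (D/(D-1))^a ≤ 1 + ε'/24 := by
    rw [hDD]
    refine (pow_one_add_le hw0 (le_trans hw1 hδ1) a).trans ?_
    have h5 : ((2:ℝ)^a - 1) * (1/(D-1)) ≤ 2^a * δ :=
      helper_2aw hw0 hw1 h2a hδ0
    have h2aC : (2:ℝ)^a ≤ C := by
      have h9 : (0:ℝ) ≤ K*((a:ℝ)+1) := by positivity
      rw [hCdef]
      linarith
    have h6 : (2:ℝ)^a * δ ≤ ε'/24 := by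
      calc (2:ℝ)^a * δ ≤ C * δ := mul_le_mul_of_nonneg_right h2aC hδ0.le
        _ ≤ C * (ε'/(24*C)) := mul_le_mul_of_nonneg_left hδ2 hC0.le
        _ = ε'/24 := by field_simp
    linarith
  constructor
  · calc 1 - ε ≤ 1 - ε' := by linarith
      _ ≤ S := by linarith
      _ ≤ (D/(D-1))^a * S := le_mul_of_one_le_left hS0 hpow1
  · calc (D/(D-1))^a * S ≤ (1 + ε'/24) * (1 + ε'/8) :=
        mul_le_mul hpow2 hShigh hS0 (by linarith)
      _ ≤ 1 + ε' := helper_eps_prod hε'0 hε'1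
      _ ≤ 1 + ε := by linarith

end
end

section
/- For every nonnegative integer $a$: $\sum_{j=0}^{a} \dfrac{(a+j)!}{j!\,j!\,(a-j)!}\,(-1)^{a-j} = 1$. -/
open Finset

lemma neg_one_pow_sub {n m : ℕ} (h : m ≤ n) :
    (-1 : ℤ) ^ (n - m) = (-1) ^ n * (-1) ^ m := by
  have : (-1 : ℤ) ^ n = (-1) ^ (n - m) * (-1) ^ m := by
    rw [← pow_add, Nat.sub_add_cancel h]
  rw [this, mul_assoc, ← pow_add, ← two_mul, pow_mul]
  simp

lemma innerSumAux (a i : ℕ) (hia : i ≤ a) :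
    ∑ j ∈ Finset.range (a + 1), (-1 : ℤ) ^ (a - j) * (a.choose j) * (j.choose i)
      = if i = a then (a.choose i : ℤ) else 0 := by
  rw [Finset.range_eq_Ico, ← Finset.sum_Ico_consecutive _ (Nat.zero_le i) (by omega)]
  have h1 : ∑ j ∈ Finset.Ico 0 i, (-1 : ℤ) ^ (a - j) * (a.choose j) * (j.choose i) = 0 := by
    apply Finset.sum_eq_zero
    intro j hj
    simp only [Finset.mem_Ico] at hj
    simp [Nat.choose_eq_zero_of_lt hj.2]
  rw [h1, zero_add, Finset.sum_Ico_eq_sum_range]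
  have hrw : ∀ m ∈ Finset.range (a + 1 - i),
      (-1 : ℤ) ^ (a - (i + m)) * (a.choose (i + m)) * ((i + m).choose i)
        = ((a.choose i : ℤ) * (-1) ^ (a - i)) * ((-1) ^ m * ((a - i).choose m)) := by
    intro m hm
    simp only [Finset.mem_range] at hm
    have hm' : m ≤ a - i := by omega
    have him : i + m ≤ a := by omega
    have hcm := Nat.choose_mul (n := a) (Nat.le_add_right i m)
    have h2 : (-1 : ℤ) ^ (a - (i + m)) = (-1) ^ (a - i) * (-1) ^ m := by
      have : a - (i + m) = (a - i) - m := by omega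
      rw [this, neg_one_pow_sub hm', neg_one_pow_sub (by omega : i ≤ a)]
    have h3 : (i + m) - i = m := by omega
    rw [h3] at hcm
    rw [h2, mul_assoc, ← Nat.cast_mul, hcm]
    push_cast
    ring
  rw [Finset.sum_congr rfl hrw, ← Finset.mul_sum]
  have : a + 1 - i = (a - i) + 1 := by omega
  rw [this, Int.alternating_sum_range_choose]
  rcases eq_or_ne i a with h | h
  · simp [h]
  · have : a - i ≠ 0 := by omega
    simp [this, h]

lemma int_identity (a : ℕ) :
    ∑ j ∈ Finset.range (a + 1),
        (-1 : ℤ) ^ (a - j) * ((a + j).choose j) * (a.choose j) = 1 := by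
  have hvdm : ∀ j, j ≤ a → ((a + j).choose j : ℤ)
      = ∑ i ∈ Finset.range (a + 1), (a.choose i : ℤ) * (j.choose i) := by
    intro j hj
    have := Nat.add_choose_eq a j j
    rw [Finset.Nat.sum_antidiagonal_eq_sum_range_succ (fun x y => a.choose x * j.choose y)] at this
    have hsum : ∑ i ∈ Finset.range (j + 1), a.choose i * j.choose (j - i)
        = ∑ i ∈ Finset.range (j + 1), a.choose i * j.choose i := by
      apply Finset.sum_congr rfl
      intro i hi
      simp only [Finset.mem_range] at hi
      rw [Nat.choose_symm (by omega)]
    rw [hsum] at this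
    rw [this]
    push_cast
    apply Finset.sum_subset
    · intro x hx
      simp only [Finset.mem_range] at *
      omega
    · intro x _ hx
      simp only [Finset.mem_range, not_lt] at hx
      have : j.choose x = 0 := Nat.choose_eq_zero_of_lt (by omega)
      simp [this]
  calc ∑ j ∈ Finset.range (a + 1),
        (-1 : ℤ) ^ (a - j) * ((a + j).choose j) * (a.choose j)
      = ∑ j ∈ Finset.range (a + 1), ∑ i ∈ Finset.range (a + 1),
          (a.choose i : ℤ) * ((-1) ^ (a - j) * (a.choose j) * (j.choose i)) := by
        apply Finset.sum_congr rfl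
        intro j hj
        simp only [Finset.mem_range] at hj
        rw [hvdm j (by omega), Finset.mul_sum, Finset.sum_mul]
        apply Finset.sum_congr rfl
        intro i _
        ring
    _ = ∑ i ∈ Finset.range (a + 1), (a.choose i : ℤ) *
          ∑ j ∈ Finset.range (a + 1), (-1 : ℤ) ^ (a - j) * (a.choose j) * (j.choose i) := by
        rw [Finset.sum_comm]
        simp [Finset.mul_sum]
    _ = 1 := by
        have : ∀ i ∈ Finset.range (a + 1), (a.choose i : ℤ) *
            (∑ j ∈ Finset.range (a + 1), (-1 : ℤ) ^ (a - j) * (a.choose j) * (j.choose i))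
            = if i = a then 1 else 0 := by
          intro i hi
          simp only [Finset.mem_range] at hi
          rw [innerSumAux a i (by omega)]
          rcases eq_or_ne i a with h | h
          · simp [h]
          · simp [h]
        rw [Finset.sum_congr rfl this, Finset.sum_ite_eq' (Finset.range (a + 1)) a (fun _ => (1:ℤ))]
        simp

/-- For every nonnegative integer `a`:
`∑_{j=0}^a (a+j)! / (j! j! (a-j)!) (-1)^{a-j} = 1`. -/
theorem stmt16 (a : ℕ) :
    ∑ j ∈ Finset.range (a + 1),
        ((a + j).factorial : ℝ) / ((j.factorial : ℝ) * j.factorial * (a - j).factorial) *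
          (-1 : ℝ) ^ (a - j) = 1 := by
  have key : ∀ j ∈ Finset.range (a + 1),
      ((a + j).factorial : ℝ) / ((j.factorial : ℝ) * j.factorial * (a - j).factorial) *
          (-1 : ℝ) ^ (a - j)
        = ((-1 : ℤ) ^ (a - j) * ((a + j).choose j) * (a.choose j) : ℤ) := by
    intro j hj
    simp only [Finset.mem_range] at hj
    have hja : j ≤ a := by omega
    have hfact : (a + j).factorial = (a + j).choose j * a.choose j *
        (j.factorial * j.factorial * (a - j).factorial) := by
      have h1 := Nat.choose_mul_factorial_mul_factorial (Nat.le_add_left j a)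
      have h2 := Nat.choose_mul_factorial_mul_factorial hja
      have h3 : a + j - j = a := by omega
      rw [h3] at h1
      calc (a + j).factorial = (a + j).choose j * j.factorial * a.factorial := h1.symm
        _ = (a + j).choose j * j.factorial * (a.choose j * j.factorial * (a - j).factorial) := by
            rw [h2]
        _ = (a + j).choose j * a.choose j *
            (j.factorial * j.factorial * (a - j).factorial) := by ring
    have hne : ((j.factorial : ℝ) * j.factorial * (a - j).factorial) ≠ 0 := by
      positivity
    rw [div_mul_eq_mul_div, div_eq_iff hne, hfact]
    push_cast
    ring
  rw [Finset.sum_congr rfl key]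
  rw [← Int.cast_sum, int_identity]
  simp
end

section
/- For all integers $1 \le k \le n$ and all $s \in [0,1]$: $f_{k,n}(s) = \dfrac{1 + \sum_{j=k+1}^{n} m_j m_{j+1}\cdots m_n (1-s)}{1 + \sum_{j=k}^{n} m_j m_{j+1}\cdots m_n (1-s)} = \dfrac{D(k+1,n) - (D(k+1,n)-1)s}{D(k,n) - (D(k,n)-1)s}$ (with the convention $D(n+1,n) = 1$), and consequently $\prod_{k=1}^{n} f_{k,n}(s) = \dfrac{1}{1 + \sum_{j=1}^{n} m_j m_{j+1}\cdots m_n (1-s)} = \dfrac{1}{D(n) - (D(n)-1)s}$. -/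
open Filter Finset

noncomputable section

/-- The geometric generating function `f_k(s) = p_k / (1 - q_k s)`. -/
def fgeo (p : ℕ → ℝ) (k : ℕ) (s : ℝ) : ℝ := p k / (1 - (1 - p k) * s)

/-- The iterated composition `f_{k,n} = f_k ∘ f_{k+1} ∘ ⋯ ∘ f_n`. -/
def fkn (p : ℕ → ℝ) (k n : ℕ) : ℝ → ℝ :=
  (List.range' k (n + 1 - k)).foldr (fun i g => fgeo p i ∘ g) id

namespace Stmt19Aux

/-- the denominator sequence -/
def Nk (p : ℕ → ℝ) (n : ℕ) (s : ℝ) (k : ℕ) : ℝ :=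
  1 + ∑ j ∈ Finset.Icc k n, (∏ i ∈ Finset.Icc j n, mSeq p i) * (1 - s)

lemma sum_Icc_bot {M : Type*} [AddCommMonoid M] (f : ℕ → M) {k n : ℕ} (h : k ≤ n) :
    ∑ j ∈ Finset.Icc k n, f j = f k + ∑ j ∈ Finset.Icc (k + 1) n, f j := by
  rw [Finset.Icc_add_one_left_eq_Ioc, ← Finset.Ioc_insert_left h, Finset.sum_insert (by simp)]

lemma prod_Icc_bot {M : Type*} [CommMonoid M] (f : ℕ → M) {k n : ℕ} (h : k ≤ n) :
    ∏ j ∈ Finset.Icc k n, f j = f k * ∏ j ∈ Finset.Icc (k + 1) n, f j := by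
  rw [Finset.Icc_add_one_left_eq_Ioc, ← Finset.Ioc_insert_left h, Finset.prod_insert (by simp)]

lemma mSeq_nonneg {p : ℕ → ℝ} (hp : ∀ k, 1 ≤ k → 0 < p k ∧ p k ≤ 1 / 2) {i : ℕ}
    (hi : 1 ≤ i) : 0 ≤ mSeq p i := by
  obtain ⟨h1, h2⟩ := hp i hi
  exact div_nonneg (by linarith) h1.le

lemma Nk_pos {p : ℕ → ℝ} (hp : ∀ k, 1 ≤ k → 0 < p k ∧ p k ≤ 1 / 2) {n : ℕ} {s : ℝ}
    (hs1 : s ≤ 1) {k : ℕ} (hk : 1 ≤ k) : 0 < Nk p n s k := by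
  have : 0 ≤ ∑ j ∈ Finset.Icc k n, (∏ i ∈ Finset.Icc j n, mSeq p i) * (1 - s) := by
    apply Finset.sum_nonneg
    intro j hj
    simp only [Finset.mem_Icc] at hj
    apply mul_nonneg _ (by linarith)
    apply Finset.prod_nonneg
    intro i hi
    simp only [Finset.mem_Icc] at hi
    exact mSeq_nonneg hp (by omega)
  unfold Nk; linarith

lemma Nk_top (p : ℕ → ℝ) (n : ℕ) (s : ℝ) : Nk p n s (n + 1) = 1 := by
  simp [Nk, Finset.Icc_eq_empty_of_lt (by omega : n < n + 1)]

lemma Nk_identity {p : ℕ → ℝ} (hp : ∀ k, 1 ≤ k → 0 < p k ∧ p k ≤ 1 / 2) {n : ℕ} {s : ℝ}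
    {k : ℕ} (hk : 1 ≤ k) (hkn : k + 1 ≤ n) :
    Nk p n s (k + 1) - (1 - p k) * Nk p n s (k + 2) = p k * Nk p n s k := by
  have hpk := (hp k hk).1
  have h1 : Nk p n s k = Nk p n s (k + 1)
      + mSeq p k * (∏ i ∈ Finset.Icc (k + 1) n, mSeq p i) * (1 - s) := by
    unfold Nk
    rw [sum_Icc_bot _ (by omega : k ≤ n), prod_Icc_bot _ (by omega : k ≤ n)]
    ring
  have h2 : Nk p n s (k + 1) = Nk p n s (k + 2)
      + (∏ i ∈ Finset.Icc (k + 1) n, mSeq p i) * (1 - s) := by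
    unfold Nk
    rw [sum_Icc_bot _ (by omega : k + 1 ≤ n)]
    ring
  have hm : p k * mSeq p k = 1 - p k := by
    unfold mSeq; field_simp
  rw [h1, h2]
  linear_combination (-(1 - s) * ∏ i ∈ Finset.Icc (k + 1) n, mSeq p i) * hm

lemma fkn_step (p : ℕ → ℝ) {k n : ℕ} (h : k ≤ n) :
    fkn p k n = fgeo p k ∘ fkn p (k + 1) n := by
  unfold fkn
  have h1 : n + 1 - k = (n - k) + 1 := by omega
  have h2 : n + 1 - (k + 1) = n - k := by omega
  rw [h1, h2, List.range'_succ, List.foldr_cons]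

lemma key {p : ℕ → ℝ} (hp : ∀ k, 1 ≤ k → 0 < p k ∧ p k ≤ 1 / 2) {n : ℕ} {s : ℝ}
    (hs0 : 0 ≤ s) (hs1 : s ≤ 1) :
    ∀ d k, 1 ≤ k → k + d = n → fkn p k n s = Nk p n s (k + 1) / Nk p n s k := by
  intro d
  induction d with
  | zero =>
    intro k hk hkn
    simp only [Nat.add_zero] at hkn
    subst hkn
    have hpk := (hp k hk).1
    have hpk2 := (hp k hk).2
    have hfk : fkn p k k s = fgeo p k s := by
      unfold fkn
      have : k + 1 - k = 1 := by omega
      rw [this]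
      simp [List.range'_succ]
    rw [hfk, Nk_top]
    have hNkk : Nk p k s k = 1 + mSeq p k * (1 - s) := by
      simp [Nk]
    rw [hNkk]
    unfold fgeo mSeq
    have hden : 0 < 1 - (1 - p k) * s := by nlinarith
    have hd2 : 0 < 1 + (1 - p k) / p k * (1 - s) := by
      have : 0 ≤ (1 - p k) / p k * (1 - s) :=
        mul_nonneg (div_nonneg (by linarith) hpk.le) (by linarith)
      linarith
    rw [div_eq_div_iff hden.ne' hd2.ne']
    field_simp
    ring
  | succ d ih =>
    intro k hk hkn
    have hk1n : k + 1 ≤ n := by omega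
    rw [fkn_step p (by omega : k ≤ n)]
    simp only [Function.comp_apply]
    rw [ih (k + 1) (by omega) (by omega)]
    have hpk := (hp k hk).1
    have hB : 0 < Nk p n s (k + 1) := Nk_pos hp hs1 (by omega)
    have hN : 0 < Nk p n s k := Nk_pos hp hs1 hk
    have hid := Nk_identity hp (s := s) hk hk1n
    unfold fgeo
    have h1 : 1 - (1 - p k) * (Nk p n s (k + 2) / Nk p n s (k + 1))
        = p k * Nk p n s k / Nk p n s (k + 1) := by
      rw [eq_div_iff hB.ne']
      field_simp
      linarith [hid]
    rw [h1]
    rw [div_div_eq_mul_div, mul_comm]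
    field_simp

lemma telescope (h : ℕ → ℝ) :
    ∀ N, (∀ i, i ≤ N → h i ≠ 0) →
      ∏ k ∈ Finset.Icc 1 N, h k / h (k - 1) = h N / h 0 := by
  intro N
  induction N with
  | zero => intro hne; simp [div_self (hne 0 le_rfl)]
  | succ N ih =>
    intro hne
    rw [Finset.prod_Icc_succ_top (by omega : 1 ≤ N + 1),
      ih (fun i hi => hne i (by omega))]
    have h0 : h 0 ≠ 0 := hne 0 (by omega)
    have hN : h N ≠ 0 := hne N (by omega)
    have : N + 1 - 1 = N := by omega
    rw [this]
    field_simp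

end Stmt19Aux

open Stmt19Aux in
/-- Explicit formula for `f_{k,n}(s)` and for `∏_{k=1}^n f_{k,n}(s)`. -/
theorem stmt19 (p : ℕ → ℝ) (hp : ∀ k, 1 ≤ k → 0 < p k ∧ p k ≤ 1 / 2)
    (k n : ℕ) (hk : 1 ≤ k) (hkn : k ≤ n) (s : ℝ) (hs : s ∈ Set.Icc (0 : ℝ) 1) :
    (fkn p k n s =
        (1 + ∑ j ∈ Finset.Icc (k + 1) n, (∏ i ∈ Finset.Icc j n, mSeq p i) * (1 - s)) /
          (1 + ∑ j ∈ Finset.Icc k n, (∏ i ∈ Finset.Icc j n, mSeq p i) * (1 - s)) ∧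
      fkn p k n s =
        (Dkn (mSeq p) (k + 1) n - (Dkn (mSeq p) (k + 1) n - 1) * s) /
          (Dkn (mSeq p) k n - (Dkn (mSeq p) k n - 1) * s)) ∧
    ((∏ k' ∈ Finset.Icc 1 n, fkn p k' n s) =
        1 / (1 + ∑ j ∈ Finset.Icc 1 n, (∏ i ∈ Finset.Icc j n, mSeq p i) * (1 - s)) ∧
      (∏ k' ∈ Finset.Icc 1 n, fkn p k' n s) =
        1 / (Dn (mSeq p) n - (Dn (mSeq p) n - 1) * s)) := by
  obtain ⟨hs0, hs1⟩ := hs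
  have hND : ∀ k', Nk p n s k' = Dkn (mSeq p) k' n - (Dkn (mSeq p) k' n - 1) * s := by
    intro k'
    unfold Nk Dkn
    rw [← Finset.sum_mul]
    ring
  have hkey : ∀ k', 1 ≤ k' → k' ≤ n → fkn p k' n s = Nk p n s (k' + 1) / Nk p n s k' := by
    intro k' h1 h2
    exact key hp hs0 hs1 (n - k') k' h1 (by omega)
  have h1 : fkn p k n s = Nk p n s (k + 1) / Nk p n s k := hkey k hk hkn
  have hprod : (∏ k' ∈ Finset.Icc 1 n, fkn p k' n s) = 1 / Nk p n s 1 := by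
    have heq : (∏ k' ∈ Finset.Icc 1 n, fkn p k' n s)
        = ∏ k' ∈ Finset.Icc 1 n, (fun i => Nk p n s (i + 1)) k'
          / (fun i => Nk p n s (i + 1)) (k' - 1) := by
      apply Finset.prod_congr rfl
      intro k' hk'
      simp only [Finset.mem_Icc] at hk'
      have : k' - 1 + 1 = k' := by omega
      rw [hkey k' hk'.1 hk'.2]
      simp only [this]
    rw [heq, telescope (fun i => Nk p n s (i + 1)) n
      (fun i _ => (Nk_pos hp hs1 (by omega : 1 ≤ i + 1)).ne')]
    simp [Nk_top]
  refine ⟨⟨h1, ?_⟩, ⟨hprod, ?_⟩⟩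
  · rw [h1, hND (k + 1), hND k]
  · rw [hprod, Dn, hND 1]
end
end
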